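/- arXiv:2408.10326 — 4 statements merged into one kernel-verified Lean document; each statement's English description precedes it below -/
import Mathlib

section
/- For t > 0 and α ∈ (−1,1), the Fourier transform of the wave kernel G_t satisfies ∫_ℝ |F G_t(ξ)|² |ξ|^α dξ = t^{1−α} 2^{1−α} A_α, where F G_t(ξ) = sin(tξ)/ξ and A_α is as defined (A_α = Γ(α) sin(πα/2)/(1−α) for α ∈ (0,1), A_α = Γ(1+α) sin(πα/2)/(α(1−α)) for α ∈ (−1,0), A_0 = π/2). -/
open MeasureTheory Real
open Set Filter Topology
open scoped ENNReal


lemma laplace_one_sub_cos {s : ℝ} (hs : 0 < s) :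
    ∫ u in Ioi (0:ℝ), (1 - Real.cos u) * Real.exp (-(s*u)) = 1/(s*(1+s^2)) := by
  have h1s : (0:ℝ) < 1 + s^2 := by positivity
  set F : ℝ → ℝ := fun u => Real.exp (-(s*u)) * (-(1/s) - (Real.sin u - s*Real.cos u)/(1+s^2))
    with hF
  have hderiv : ∀ u : ℝ, HasDerivAt F ((1 - Real.cos u) * Real.exp (-(s*u))) u := by
    intro u
    have h1 : HasDerivAt (fun u : ℝ => -(s*u)) (-s) u := by
      simpa using ((hasDerivAt_id u).const_mul (-s))
    have h2 : HasDerivAt (fun u => Real.exp (-(s*u))) (Real.exp (-(s*u)) * (-s)) u := h1.exp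
    have h3 : HasDerivAt (fun u : ℝ => (-(1/s) - (Real.sin u - s*Real.cos u)/(1+s^2)))
        (-((Real.cos u - s * -Real.sin u)/(1+s^2))) u := by
      exact (((Real.hasDerivAt_sin u).sub ((Real.hasDerivAt_cos u).const_mul s)).div_const
        (1+s^2)).const_sub (-(1/s))
    have h4 : HasDerivAt (fun u => Real.exp (-(s*u)) * (-(1/s) - (Real.sin u - s*Real.cos u)/(1+s^2))) _ u := h2.mul h3
    convert h4 using 1
    field_simp
    ring
  have hint : IntegrableOn (fun u => (1 - Real.cos u) * Real.exp (-(s*u))) (Ioi 0) := by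
    have hexp := exp_neg_integrableOn_Ioi 0 hs
    refine Integrable.mono' (hexp.const_mul 2) ?_ ?_
    · exact (Continuous.mul (by continuity) (by continuity)).aestronglyMeasurable
    · filter_upwards with u
      rw [norm_mul, norm_of_nonneg (by nlinarith [Real.cos_le_one u] : (0:ℝ) ≤ 1 - Real.cos u),
        Real.norm_eq_abs, Real.abs_exp, neg_mul]
      nlinarith [Real.neg_one_le_cos u, Real.exp_pos (-(s*u))]
  have htend : Tendsto F atTop (𝓝 0) := by
    apply squeeze_zero_norm (a := fun u => (1/s + (1+s)/(1+s^2)) * Real.exp (-s*u))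
    · intro u
      have hnum : |Real.sin u - s*Real.cos u| ≤ 1 + s := by
        calc |Real.sin u - s*Real.cos u| ≤ |Real.sin u| + |s*Real.cos u| := abs_sub _ _
        _ ≤ 1 + s := by
            rw [abs_mul, abs_of_pos hs]
            have := Real.abs_sin_le_one u
            have := Real.abs_cos_le_one u
            nlinarith
      have hG : |(-(1/s) - (Real.sin u - s*Real.cos u)/(1+s^2))| ≤ 1/s + (1+s)/(1+s^2) := by
        calc |(-(1/s) - (Real.sin u - s*Real.cos u)/(1+s^2))|
            ≤ |(-(1/s))| + |(Real.sin u - s*Real.cos u)/(1+s^2)| := abs_sub _ _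
        _ ≤ 1/s + (1+s)/(1+s^2) := by
            rw [abs_neg, abs_of_pos (by positivity : (0:ℝ) < 1/s), abs_div,
              abs_of_pos h1s]
            gcongr
      calc ‖F u‖ = Real.exp (-(s*u)) * |(-(1/s) - (Real.sin u - s*Real.cos u)/(1+s^2))| := by
            rw [hF]; simp [abs_mul, Real.abs_exp]
      _ ≤ Real.exp (-(s*u)) * (1/s + (1+s)/(1+s^2)) := by
            gcongr
      _ = (1/s + (1+s)/(1+s^2)) * Real.exp (-s*u) := by rw [neg_mul]; ring
    · have h0 : Tendsto (fun u : ℝ => Real.exp (-s*u)) atTop (𝓝 0) := by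
        simp_rw [neg_mul, Real.exp_neg]
        exact (tendsto_exp_atTop.comp (tendsto_id.const_mul_atTop hs)).inv_tendsto_atTop
      simpa using h0.const_mul (1/s + (1+s)/(1+s^2))
  have := integral_Ioi_of_hasDerivAt_of_tendsto' (f := F)
    (fun x _ => hderiv x) hint htend
  rw [this, hF]
  simp only [mul_zero, neg_zero, Real.exp_zero, Real.sin_zero, Real.cos_zero, one_mul, mul_one]
  field_simp
  ring

lemma lint_eq_int {f : ℝ → ℝ} {s : Set ℝ} (hs : MeasurableSet s) (hf : IntegrableOn f s)
    (h0 : ∀ x ∈ s, 0 ≤ f x) :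
    ∫⁻ x in s, ENNReal.ofReal (f x) = ENNReal.ofReal (∫ x in s, f x) :=
  (ofReal_integral_eq_lintegral_ofReal hf ((ae_restrict_iff' hs).2 (ae_of_all _ h0))).symm

lemma int_of_lint {f : ℝ → ℝ} {s : Set ℝ} (hs : MeasurableSet s)
    (hm : AEStronglyMeasurable f (volume.restrict s)) (h0 : ∀ x ∈ s, 0 ≤ f x)
    (hfin : ∫⁻ x in s, ENNReal.ofReal (f x) ≠ ⊤) : IntegrableOn f s := by
  refine ⟨hm, ?_⟩
  rw [hasFiniteIntegral_iff_ofReal ((ae_restrict_iff' hs).2 (ae_of_all _ h0))]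
  exact hfin.lt_top

lemma K_val {α : ℝ} (ha1 : -1 < α) (ha2 : α < 1) :
    ∫⁻ x in Ioi (0:ℝ), ENNReal.ofReal (x ^ (-α) / (1 + x^2))
      = ENNReal.ofReal (π / (2 * Real.cos (π*α/2))) := by
  set F : ℝ → ℝ → ℝ≥0∞ := fun x v => ENNReal.ofReal (x ^ (-α) * Real.exp (-((1+x^2)*v)))
    with hFdef
  have hmeas : AEMeasurable (Function.uncurry F)
      ((volume.restrict (Ioi (0:ℝ))).prod (volume.restrict (Ioi (0:ℝ)))) := by
    apply Measurable.aemeasurable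
    have huncurry : Function.uncurry F = fun p : ℝ × ℝ =>
        ENNReal.ofReal (p.1 ^ (-α) * Real.exp (-((1+p.1^2)*p.2))) := rfl
    rw [huncurry]
    apply Measurable.ennreal_ofReal
    fun_prop
  have hswap := lintegral_lintegral_swap hmeas
  -- inner over v
  have hstep1 : ∀ x ∈ Ioi (0:ℝ), ∫⁻ v in Ioi (0:ℝ), F x v
      = ENNReal.ofReal (x ^ (-α) / (1 + x^2)) := by
    intro x hx
    have hc : (0:ℝ) < 1 + x^2 := by positivity
    have hxa : (0:ℝ) ≤ x ^ (-α) := Real.rpow_nonneg (le_of_lt hx) _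
    have hint : IntegrableOn (fun v => Real.exp (-((1+x^2)*v))) (Ioi (0:ℝ)) := by
      have h := exp_neg_integrableOn_Ioi 0 hc
      exact h.congr_fun (fun v _ => by simp only [neg_mul]) measurableSet_Ioi
    calc ∫⁻ v in Ioi (0:ℝ), F x v
        = ∫⁻ v in Ioi (0:ℝ), ENNReal.ofReal (x ^ (-α)) *
            ENNReal.ofReal (Real.exp (-((1+x^2)*v))) := by
          simp_rw [hFdef, ENNReal.ofReal_mul hxa]
    _ = ENNReal.ofReal (x ^ (-α)) * ∫⁻ v in Ioi (0:ℝ),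
          ENNReal.ofReal (Real.exp (-((1+x^2)*v))) := by
          rw [lintegral_const_mul' _ _ ENNReal.ofReal_ne_top]
    _ = ENNReal.ofReal (x ^ (-α)) * ENNReal.ofReal (∫ v in Ioi (0:ℝ),
          Real.exp (-((1+x^2)*v))) := by
          rw [lint_eq_int measurableSet_Ioi hint (fun v _ => (Real.exp_pos _).le)]
    _ = ENNReal.ofReal (x ^ (-α) / (1 + x^2)) := by
          have hval : ∫ v in Ioi (0:ℝ), Real.exp (-((1+x^2)*v)) = 1/(1+x^2) := by
            have := integral_rpow_mul_exp_neg_mul_Ioi (a := 1) one_pos hc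
            simp only [sub_self, Real.rpow_zero, one_mul, Real.rpow_one, Real.Gamma_one,
              mul_one] at this
            simpa using this
          rw [hval, ← ENNReal.ofReal_mul hxa, mul_one_div]
  have hcos : 0 < Real.cos (π*α/2) := by
    apply Real.cos_pos_of_mem_Ioo
    constructor
    · nlinarith [Real.pi_pos]
    · nlinarith [Real.pi_pos]
  set c : ℝ := (1/2) * Real.Gamma ((1-α)/2) with hcdef
  have hc0 : 0 ≤ c := by
    have := Real.Gamma_pos_of_pos (by linarith : (0:ℝ) < (1-α)/2)
    positivity
  have hstep2 : ∀ v ∈ Ioi (0:ℝ), ∫⁻ x in Ioi (0:ℝ), F x v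
      = ENNReal.ofReal (c * (v ^ ((α-1)/2) * Real.exp (-v))) := by
    intro v hv
    have hv' : (0:ℝ) < v := hv
    have hint : IntegrableOn (fun x : ℝ => x ^ (-α) * Real.exp (-v * x ^ (2:ℝ)))
        (Ioi (0:ℝ)) := integrableOn_rpow_mul_exp_neg_mul_rpow (by linarith) two_pos hv'
    calc ∫⁻ x in Ioi (0:ℝ), F x v
        = ∫⁻ x in Ioi (0:ℝ),
            ENNReal.ofReal (x ^ (-α) * Real.exp (-v * x ^ (2:ℝ))) * ENNReal.ofReal (Real.exp (-v)) := by
          refine setLIntegral_congr_fun measurableSet_Ioi (fun x hx => ?_)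
          have hx' : (0:ℝ) < x := hx
          simp only [hFdef]
          rw [← ENNReal.ofReal_mul (by positivity)]
          congr 1
          rw [show ((2:ℝ)) = ((2:ℕ):ℝ) by norm_num, Real.rpow_natCast]
          rw [show -((1+x^2)*v) = -v * x^2 + -v by ring, Real.exp_add]
          ring
    _ = (∫⁻ x in Ioi (0:ℝ), ENNReal.ofReal (x ^ (-α) * Real.exp (-v * x ^ (2:ℝ))))
          * ENNReal.ofReal (Real.exp (-v)) := by
          rw [lintegral_mul_const' _ _ ENNReal.ofReal_ne_top]
    _ = ENNReal.ofReal (v ^ (-(-α+1)/2) * (1/2) * Real.Gamma ((-α+1)/2))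
          * ENNReal.ofReal (Real.exp (-v)) := by
          rw [lint_eq_int measurableSet_Ioi hint
            (fun x hx => by have hx' : (0:ℝ) < x := hx; positivity),
            integral_rpow_mul_exp_neg_mul_rpow two_pos (by linarith) hv']
    _ = ENNReal.ofReal (c * (v ^ ((α-1)/2) * Real.exp (-v))) := by
          rw [← ENNReal.ofReal_mul (mul_nonneg (mul_nonneg (Real.rpow_nonneg hv'.le _)
            (by norm_num)) (Real.Gamma_pos_of_pos (by linarith : (0:ℝ) < (-α+1)/2)).le)]
          congr 1
          rw [hcdef, show (-(-α+1)/2 : ℝ) = (α-1)/2 by ring, show ((-α+1)/2 : ℝ) = (1-α)/2 by ring]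
          ring
  have hΓval : ∫ x in Ioi (0:ℝ), x ^ ((α-1)/2) * Real.exp (-x) = Real.Gamma ((α+1)/2) := by
    have := integral_rpow_mul_exp_neg_mul_Ioi (a := (α+1)/2) (by linarith) one_pos
    simp only [one_div, inv_one, Real.one_rpow, one_mul] at this
    rw [← this]
    refine setIntegral_congr_fun measurableSet_Ioi (fun x hx => ?_)
    rw [show ((α+1)/2 - 1 : ℝ) = (α-1)/2 by ring]
  have hΓint : IntegrableOn (fun x : ℝ => x ^ ((α-1)/2) * Real.exp (-x)) (Ioi (0:ℝ)) := by
    have h := integrableOn_rpow_mul_exp_neg_mul_rpow (p := 1) (s := (α-1)/2) (b := 1)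
      (by linarith) one_pos one_pos
    refine h.congr_fun (fun x _ => ?_) measurableSet_Ioi
    simp only [Real.rpow_one, neg_one_mul]
  have hrefl := Real.Gamma_mul_Gamma_one_sub ((1-α)/2)
  rw [show (1:ℝ) - (1-α)/2 = (α+1)/2 by ring,
    show π * ((1-α)/2) = π/2 - π*α/2 by ring, Real.sin_pi_div_two_sub] at hrefl
  calc ∫⁻ x in Ioi (0:ℝ), ENNReal.ofReal (x ^ (-α) / (1 + x^2))
      = ∫⁻ x in Ioi (0:ℝ), ∫⁻ v in Ioi (0:ℝ), F x v :=
        (setLIntegral_congr_fun measurableSet_Ioi hstep1).symm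
  _ = ∫⁻ v in Ioi (0:ℝ), ∫⁻ x in Ioi (0:ℝ), F x v := hswap
  _ = ∫⁻ v in Ioi (0:ℝ), ENNReal.ofReal (c * (v ^ ((α-1)/2) * Real.exp (-v))) :=
        setLIntegral_congr_fun measurableSet_Ioi hstep2
  _ = ENNReal.ofReal c * ∫⁻ v in Ioi (0:ℝ), ENNReal.ofReal (v ^ ((α-1)/2) * Real.exp (-v)) := by
        simp_rw [ENNReal.ofReal_mul hc0]
        rw [lintegral_const_mul' _ _ ENNReal.ofReal_ne_top]
  _ = ENNReal.ofReal c * ENNReal.ofReal (Real.Gamma ((α+1)/2)) := by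
        rw [lint_eq_int measurableSet_Ioi hΓint
          (fun x hx => by have hx' : (0:ℝ) < x := hx; positivity), hΓval]
  _ = ENNReal.ofReal (π / (2 * Real.cos (π*α/2))) := by
        rw [← ENNReal.ofReal_mul hc0]
        congr 1
        have hkey : Real.Gamma ((1-α)/2) * Real.Gamma ((α+1)/2) * Real.cos (π*α/2) = π := by
          rw [hrefl]; field_simp
        rw [hcdef, eq_div_iff (by positivity)]
        linear_combination hkey

lemma J_val {α : ℝ} (ha1 : -1 < α) (ha2 : α < 1) :
    ∫⁻ u in Ioi (0:ℝ), ENNReal.ofReal ((1 - Real.cos u) * u ^ (α-2))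
      = ENNReal.ofReal (π / (2 * Real.cos (π*α/2) * Real.Gamma (2-α))) := by
  have hΓpos : 0 < Real.Gamma (2-α) := Real.Gamma_pos_of_pos (by linarith)
  have hcos : 0 < Real.cos (π*α/2) := by
    apply Real.cos_pos_of_mem_Ioo
    constructor
    · nlinarith [Real.pi_pos]
    · nlinarith [Real.pi_pos]
  set F : ℝ → ℝ → ℝ≥0∞ :=
    fun u s => ENNReal.ofReal ((1 - Real.cos u) * (s ^ (1-α) * Real.exp (-(u*s)))) with hFdef
  have hmeas : AEMeasurable (Function.uncurry F)
      ((volume.restrict (Ioi (0:ℝ))).prod (volume.restrict (Ioi (0:ℝ)))) := by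
    apply Measurable.aemeasurable
    have huncurry : Function.uncurry F = fun p : ℝ × ℝ =>
        ENNReal.ofReal ((1 - Real.cos p.1) * (p.2 ^ (1-α) * Real.exp (-(p.1*p.2)))) := rfl
    rw [huncurry]
    apply Measurable.ennreal_ofReal
    fun_prop
  have hswap := lintegral_lintegral_swap hmeas
  have hstep1 : ∀ u ∈ Ioi (0:ℝ), ∫⁻ s in Ioi (0:ℝ), F u s
      = ENNReal.ofReal ((1 - Real.cos u) * u ^ (α-2)) * ENNReal.ofReal (Real.Gamma (2-α)) := by
    intro u hu
    have hu' : (0:ℝ) < u := hu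
    have hcosu : (0:ℝ) ≤ 1 - Real.cos u := by nlinarith [Real.cos_le_one u]
    have hint : IntegrableOn (fun s : ℝ => s ^ (1-α) * Real.exp (-(u*s))) (Ioi (0:ℝ)) := by
      have h := integrableOn_rpow_mul_exp_neg_mul_rpow (p := 1) (s := 1-α) (b := u)
        (by linarith) one_pos hu'
      refine h.congr_fun (fun s _ => ?_) measurableSet_Ioi
      simp only [Real.rpow_one, neg_mul]
    have hval : ∫ s in Ioi (0:ℝ), s ^ (1-α) * Real.exp (-(u*s)) = u ^ (α-2) * Real.Gamma (2-α) := by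
      have h := integral_rpow_mul_exp_neg_mul_Ioi (a := 2-α) (by linarith) hu'
      rw [show ((2:ℝ)-α-1) = 1-α by ring] at h
      rw [h, one_div, Real.inv_rpow hu'.le, ← Real.rpow_neg hu'.le,
        show (-(2-α) : ℝ) = α-2 by ring]
    calc ∫⁻ s in Ioi (0:ℝ), F u s
        = ∫⁻ s in Ioi (0:ℝ), ENNReal.ofReal (1 - Real.cos u) *
            ENNReal.ofReal (s ^ (1-α) * Real.exp (-(u*s))) := by
          simp_rw [hFdef, ENNReal.ofReal_mul hcosu]
    _ = ENNReal.ofReal (1 - Real.cos u) *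
          ∫⁻ s in Ioi (0:ℝ), ENNReal.ofReal (s ^ (1-α) * Real.exp (-(u*s))) := by
          rw [lintegral_const_mul' _ _ ENNReal.ofReal_ne_top]
    _ = ENNReal.ofReal (1 - Real.cos u) * ENNReal.ofReal (u ^ (α-2) * Real.Gamma (2-α)) := by
          rw [lint_eq_int measurableSet_Ioi hint
            (fun s hs => by have hs' : (0:ℝ) < s := hs; positivity), hval]
    _ = ENNReal.ofReal ((1 - Real.cos u) * u ^ (α-2)) * ENNReal.ofReal (Real.Gamma (2-α)) := by
          rw [← ENNReal.ofReal_mul hcosu, ← ENNReal.ofReal_mul (by positivity), mul_assoc]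
  have hstep2 : ∀ s ∈ Ioi (0:ℝ), ∫⁻ u in Ioi (0:ℝ), F u s
      = ENNReal.ofReal (s ^ (-α) / (1 + s^2)) := by
    intro s hs
    have hs' : (0:ℝ) < s := hs
    have hsa : (0:ℝ) ≤ s ^ (1-α) := Real.rpow_nonneg hs'.le _
    have hint : IntegrableOn (fun u => (1 - Real.cos u) * Real.exp (-(s*u))) (Ioi (0:ℝ)) := by
      have hexp := exp_neg_integrableOn_Ioi 0 hs'
      refine Integrable.mono' (hexp.const_mul 2) ?_ ?_
      · exact (Continuous.mul (by continuity) (by continuity)).aestronglyMeasurable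
      · filter_upwards with u
        rw [norm_mul, norm_of_nonneg (by nlinarith [Real.cos_le_one u] : (0:ℝ) ≤ 1 - Real.cos u),
          Real.norm_eq_abs, Real.abs_exp, neg_mul]
        nlinarith [Real.neg_one_le_cos u, Real.exp_pos (-(s*u))]
    calc ∫⁻ u in Ioi (0:ℝ), F u s
        = ∫⁻ u in Ioi (0:ℝ), ENNReal.ofReal (s ^ (1-α)) *
            ENNReal.ofReal ((1 - Real.cos u) * Real.exp (-(s*u))) := by
          refine setLIntegral_congr_fun measurableSet_Ioi (fun u hu => ?_)
          simp only [hFdef]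
          rw [← ENNReal.ofReal_mul hsa]
          congr 1
          rw [mul_comm u s]
          ring
    _ = ENNReal.ofReal (s ^ (1-α)) *
          ∫⁻ u in Ioi (0:ℝ), ENNReal.ofReal ((1 - Real.cos u) * Real.exp (-(s*u))) := by
          rw [lintegral_const_mul' _ _ ENNReal.ofReal_ne_top]
    _ = ENNReal.ofReal (s ^ (1-α)) * ENNReal.ofReal (1/(s*(1+s^2))) := by
          rw [lint_eq_int measurableSet_Ioi hint
            (fun u hu => by
              have := Real.cos_le_one u
              have := Real.exp_pos (-(s*u))
              nlinarith), laplace_one_sub_cos hs']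
    _ = ENNReal.ofReal (s ^ (-α) / (1 + s^2)) := by
          rw [← ENNReal.ofReal_mul hsa]
          congr 1
          rw [show (1-α : ℝ) = 1 + (-α) by ring, Real.rpow_add hs', Real.rpow_one]
          field_simp
  have hK := K_val ha1 ha2
  have hmain : (∫⁻ u in Ioi (0:ℝ), ENNReal.ofReal ((1 - Real.cos u) * u ^ (α-2)))
      * ENNReal.ofReal (Real.Gamma (2-α)) = ENNReal.ofReal (π / (2 * Real.cos (π*α/2))) := by
    calc (∫⁻ u in Ioi (0:ℝ), ENNReal.ofReal ((1 - Real.cos u) * u ^ (α-2)))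
        * ENNReal.ofReal (Real.Gamma (2-α))
        = ∫⁻ u in Ioi (0:ℝ), ENNReal.ofReal ((1 - Real.cos u) * u ^ (α-2))
            * ENNReal.ofReal (Real.Gamma (2-α)) := by
          rw [lintegral_mul_const' _ _ ENNReal.ofReal_ne_top]
    _ = ∫⁻ u in Ioi (0:ℝ), ∫⁻ s in Ioi (0:ℝ), F u s :=
          (setLIntegral_congr_fun measurableSet_Ioi hstep1).symm
    _ = ∫⁻ s in Ioi (0:ℝ), ∫⁻ u in Ioi (0:ℝ), F u s := hswap
    _ = ∫⁻ s in Ioi (0:ℝ), ENNReal.ofReal (s ^ (-α) / (1 + s^2)) :=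
          setLIntegral_congr_fun measurableSet_Ioi hstep2
    _ = ENNReal.ofReal (π / (2 * Real.cos (π*α/2))) := hK
  have h2 : ENNReal.ofReal (π / (2 * Real.cos (π*α/2) * Real.Gamma (2-α)))
      * ENNReal.ofReal (Real.Gamma (2-α)) = ENNReal.ofReal (π / (2 * Real.cos (π*α/2))) := by
    rw [← ENNReal.ofReal_mul (by positivity)]
    congr 1
    field_simp
  have hcancel : ∀ a b : ℝ≥0∞, a * ENNReal.ofReal (Real.Gamma (2-α))
      = b * ENNReal.ofReal (Real.Gamma (2-α)) → a = b := by
    intro a b hab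
    have h0 : ENNReal.ofReal (Real.Gamma (2-α)) ≠ 0 := by
      simp [ENNReal.ofReal_eq_zero, not_le, hΓpos]
    exact (ENNReal.mul_left_strictMono h0 ENNReal.ofReal_ne_top).injective
      (by simpa [mul_comm] using hab)
  exact hcancel _ _ (hmain.trans h2.symm)

lemma I_val {α : ℝ} (ha1 : -1 < α) (ha2 : α < 1) :
    IntegrableOn (fun u => (1 - Real.cos u) * u ^ (α-2)) (Ioi (0:ℝ)) ∧
    ∫ u in Ioi (0:ℝ), (1 - Real.cos u) * u ^ (α-2)
      = π / (2 * Real.cos (π*α/2) * Real.Gamma (2-α)) := by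
  have hΓpos : 0 < Real.Gamma (2-α) := Real.Gamma_pos_of_pos (by linarith)
  have hcos : 0 < Real.cos (π*α/2) := by
    apply Real.cos_pos_of_mem_Ioo
    constructor
    · nlinarith [Real.pi_pos]
    · nlinarith [Real.pi_pos]
  have hJ := J_val ha1 ha2
  have h0 : ∀ u ∈ Ioi (0:ℝ), 0 ≤ (1 - Real.cos u) * u ^ (α-2) := fun u hu => by
    have hu' : (0:ℝ) < u := hu
    have := Real.cos_le_one u
    have : (0:ℝ) ≤ 1 - Real.cos u := by linarith
    positivity
  have hintg : IntegrableOn (fun u => (1 - Real.cos u) * u ^ (α-2)) (Ioi (0:ℝ)) := by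
    refine int_of_lint measurableSet_Ioi ?_ h0 ?_
    · apply Measurable.aestronglyMeasurable
      fun_prop
    · rw [hJ]; exact ENNReal.ofReal_ne_top
  refine ⟨hintg, ?_⟩
  have := lint_eq_int measurableSet_Ioi hintg h0
  rw [hJ] at this
  have hnn : 0 ≤ ∫ u in Ioi (0:ℝ), (1 - Real.cos u) * u ^ (α-2) :=
    setIntegral_nonneg measurableSet_Ioi h0
  rw [ENNReal.ofReal_eq_ofReal_iff (by positivity) hnn] at this
  linarith [this]
theorem stmt_7 (A : ℝ → ℝ)
    (h1 : ∀ α ∈ Set.Ioo (0 : ℝ) 1, A α = Real.Gamma α * Real.sin (π * α / 2) / (1 - α))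
    (h2 : ∀ α ∈ Set.Ioo (-1 : ℝ) 0,
      A α = Real.Gamma (1 + α) * Real.sin (π * α / 2) / (α * (1 - α)))
    (h3 : A 0 = π / 2)
    (t α : ℝ) (ht : 0 < t) (hα : α ∈ Set.Ioo (-1 : ℝ) 1) :
    (∫ ξ : ℝ, (Real.sin (t * ξ)) ^ 2 / ξ ^ 2 * |ξ| ^ α) =
      t ^ (1 - α) * 2 ^ (1 - α) * A α := by
  obtain ⟨hα1, hα2⟩ := hα
  have hΓpos : 0 < Real.Gamma (2-α) := Real.Gamma_pos_of_pos (by linarith)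
  have hcos : 0 < Real.cos (π*α/2) := by
    apply Real.cos_pos_of_mem_Ioo
    constructor
    · nlinarith [Real.pi_pos]
    · nlinarith [Real.pi_pos]
  obtain ⟨hInt, hI⟩ := I_val hα1 hα2
  set I : ℝ := π / (2 * Real.cos (π*α/2) * Real.Gamma (2-α)) with hIdef
  have h2t : (0:ℝ) < 2*t := by linarith
  have heven : ∀ ξ : ℝ, Real.sin (t*ξ)^2 / ξ^2 * |ξ|^α
      = (fun x : ℝ => Real.sin (t*x)^2 / x^2 * |x|^α) |ξ| := by
    intro ξ
    show _ = Real.sin (t*|ξ|)^2 / |ξ|^2 * ‖(|ξ|)‖^α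
    rw [Real.norm_eq_abs, abs_abs]
    rcases le_or_gt 0 ξ with h|h
    · rw [abs_of_nonneg h]
    · rw [abs_of_neg h]
      simp [mul_neg, Real.sin_neg, neg_sq]
  have hsplit : (∫ ξ : ℝ, Real.sin (t*ξ)^2 / ξ^2 * |ξ|^α)
      = 2 * ∫ x in Ioi (0:ℝ), Real.sin (t*x)^2 / x^2 * |x|^α := by
    rw [integral_congr_ae (ae_of_all _ heven)]
    exact integral_comp_abs (f := fun x : ℝ => Real.sin (t*x)^2 / x^2 * |x|^α)
  have hIoi : ∫ x in Ioi (0:ℝ), Real.sin (t*x)^2 / x^2 * |x|^α = (2*t)^((1:ℝ)-α) * I / 2 := by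
    have hcomb : (2*t)^((2:ℝ)-α) * (2*t)^(α-2) = 1 := by
      rw [← Real.rpow_add h2t]; norm_num
    have hg : ∀ x ∈ Ioi (0:ℝ), Real.sin (t*x)^2 / x^2 * |x|^α
        = ((1/2) * (2*t)^((2:ℝ)-α)) * ((1 - Real.cos (2*t*x)) * (2*t*x)^(α-2)) := by
      intro x hx
      have hx' : (0:ℝ) < x := hx
      have hsin : Real.sin (t*x)^2 = (1 - Real.cos (2*(t*x)))/2 := by
        have hc2 := Real.cos_two_mul (t*x)
        nlinarith [Real.sin_sq_add_cos_sq (t*x)]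
      have habs : |x| = x := abs_of_pos hx'
      have hpow : ((2*t*x : ℝ))^(α-2) = (2*t)^(α-2) * x^(α-2) := Real.mul_rpow h2t.le hx'.le
      have hxa : x^(α-2) = x^α / x^2 := by
        rw [Real.rpow_sub hx', show ((2:ℝ)) = ((2:ℕ):ℝ) by norm_num, Real.rpow_natCast]
      rw [habs, hsin, hpow, hxa, mul_assoc 2 t x]
      have hre : ((1/2) * (2*t)^((2:ℝ)-α)) * ((1 - Real.cos (2*(t*x))) *
            ((2*t)^(α-2) * (x^α / x^2)))
          = (1/2) * ((2*t)^((2:ℝ)-α) * (2*t)^(α-2)) *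
            ((1 - Real.cos (2*(t*x))) * (x^α / x^2)) := by ring
      rw [hre, hcomb]
      ring
    have hsub := integral_comp_mul_left_Ioi (fun u => (1 - Real.cos u) * u ^ (α-2)) 0 h2t
    simp only [mul_zero] at hsub
    rw [hI] at hsub
    calc ∫ x in Ioi (0:ℝ), Real.sin (t*x)^2 / x^2 * |x|^α
        = ∫ x in Ioi (0:ℝ), ((1/2) * (2*t)^((2:ℝ)-α)) *
            ((1 - Real.cos (2*t*x)) * (2*t*x)^(α-2)) :=
          setIntegral_congr_fun measurableSet_Ioi hg
    _ = ((1/2) * (2*t)^((2:ℝ)-α)) * ∫ x in Ioi (0:ℝ),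
          (1 - Real.cos (2*t*x)) * (2*t*x)^(α-2) := by
          rw [MeasureTheory.integral_const_mul]
    _ = ((1/2) * (2*t)^((2:ℝ)-α)) * ((2*t)⁻¹ * I) := by
          rw [hsub]; simp [smul_eq_mul]
    _ = (2*t)^((1:ℝ)-α) * I / 2 := by
          have hinv : (2*t)^((2:ℝ)-α) * (2*t)⁻¹ = (2*t)^((1:ℝ)-α) := by
            rw [← Real.rpow_neg_one (2*t), ← Real.rpow_add h2t,
              show ((2:ℝ)-α + -1) = 1-α by ring]
          rw [← hinv]; ring
  have hAI : A α = I := by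
    rcases lt_trichotomy α 0 with hneg|hzero|hpos
    · rw [h2 α ⟨hα1, hneg⟩, hIdef]
      have hG2 : Real.Gamma (2-α) = (1-α) * Real.Gamma (1-α) := by
        rw [show (2:ℝ)-α = (1-α)+1 by ring, Real.Gamma_add_one (by linarith : (1:ℝ)-α ≠ 0)]
      have hG1 : Real.Gamma (1+α) = α * Real.Gamma α := by
        rw [show (1:ℝ)+α = α+1 by ring, Real.Gamma_add_one (ne_of_lt hneg)]
      have hsinne : Real.sin (π*α) ≠ 0 := by
        have : Real.sin (π*α) < 0 := by
          apply Real.sin_neg_of_neg_of_neg_pi_lt <;> nlinarith [Real.pi_pos]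
        linarith
      have key : Real.Gamma α * Real.Gamma (1-α) * Real.sin (π*α) = π := by
        rw [Real.Gamma_mul_Gamma_one_sub α]; field_simp
      rw [show π*α = 2*(π*α/2) by ring, Real.sin_two_mul] at key
      rw [div_eq_div_iff (by nlinarith : α*(1-α) ≠ 0) (by positivity)]
      calc Real.Gamma (1+α) * Real.sin (π*α/2) * (2 * Real.cos (π*α/2) * Real.Gamma (2-α))
          = (α*(1-α)) * (Real.Gamma α * Real.Gamma (1-α) *
              (2 * Real.sin (π*α/2) * Real.cos (π*α/2))) := by rw [hG1, hG2]; ring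
      _ = π * (α*(1-α)) := by rw [key]; ring
    · subst hzero
      have hΓ2 : Real.Gamma 2 = 1 := by
        rw [show (2:ℝ) = 1+1 by norm_num, Real.Gamma_add_one one_ne_zero, Real.Gamma_one, mul_one]
      rw [h3, hIdef]
      norm_num [hΓ2]
    · rw [h1 α ⟨hpos, hα2⟩, hIdef]
      have hG2 : Real.Gamma (2-α) = (1-α) * Real.Gamma (1-α) := by
        rw [show (2:ℝ)-α = (1-α)+1 by ring, Real.Gamma_add_one (by linarith : (1:ℝ)-α ≠ 0)]
      have hsinne : Real.sin (π*α) ≠ 0 := by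
        have : 0 < Real.sin (π*α) := by
          apply Real.sin_pos_of_pos_of_lt_pi <;> nlinarith [Real.pi_pos]
        linarith
      have key : Real.Gamma α * Real.Gamma (1-α) * Real.sin (π*α) = π := by
        rw [Real.Gamma_mul_Gamma_one_sub α]; field_simp
      rw [show π*α = 2*(π*α/2) by ring, Real.sin_two_mul] at key
      rw [div_eq_div_iff (by linarith : (1:ℝ)-α ≠ 0) (by positivity)]
      calc Real.Gamma α * Real.sin (π*α/2) * (2 * Real.cos (π*α/2) * Real.Gamma (2-α))
          = (1-α) * (Real.Gamma α * Real.Gamma (1-α) *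
              (2 * Real.sin (π*α/2) * Real.cos (π*α/2))) := by rw [hG2]; ring
      _ = π * (1-α) := by rw [key]; ring
  rw [hsplit, hIoi, Real.mul_rpow (by norm_num : (0:ℝ) ≤ 2) ht.le, hAI]
  ring
end

section
/- For α ∈ (0,1) and x,x' ∈ ℝ, t ∈ [0,T], the quantity A_α(x,x',t) := ∫₀ᵗ ∫_ℝ ∫_ℝ |G_s(x−y) − G_s(x'−y)| · c_{1−α}|y−z|^{−α} · |G_s(x−z) − G_s(x'−z)| dy dz ds satisfies A_α(x,x',t) ≤ C · (min(|x−x'|,1))^{2−α}, where C depends only on T and a positive lower bound α_b ≤ α. -/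
open MeasureTheory Real

/-- The 1D wave kernel `G_s(z) = (1/2)·1_{|z|<s}`. -/
noncomputable def waveKernel (s z : ℝ) : ℝ := if |z| < s then 1/2 else 0

/-- The constant `c_β = sin(βπ/2)Γ(1−β)/π`. -/
noncomputable def rieszConst (β : ℝ) : ℝ := Real.sin (β * π / 2) * Real.Gamma (1 - β) / π

open Set

lemma absRpowII {r : ℝ} (hr : (-1:ℝ) < r) (c d : ℝ) :
    IntervalIntegrable (fun u : ℝ => |u| ^ r) volume c d := by
  have H : ∀ R : ℝ, 0 ≤ R → IntervalIntegrable (fun u : ℝ => |u| ^ r) volume 0 R := by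
    intro R hR
    refine (intervalIntegral.intervalIntegrable_rpow' hr (a := 0) (b := R)).congr ?_
    intro u hu; beta_reduce
    rw [uIoc_of_le hR] at hu
    rw [abs_of_pos hu.1]
  have hR : (0:ℝ) ≤ max |c| |d| := le_trans (abs_nonneg c) (le_max_left _ _)
  have h1 : IntervalIntegrable (fun u : ℝ => |u| ^ r) volume (-(max |c| |d|)) 0 := by
    have h2 := (IntervalIntegrable.iff_comp_neg (f := fun u : ℝ => |u| ^ r)).mp (H _ hR)
    simp only [abs_neg, neg_zero] at h2
    exact h2.symm
  refine (h1.trans (H _ hR)).mono_set ?_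
  have hcm : c ∈ uIcc (-(max |c| |d|)) (max |c| |d|) := by
    rw [uIcc_of_le (by linarith)]
    have := abs_le.mp (le_max_left |c| |d|)
    exact ⟨this.1, this.2⟩
  have hdm : d ∈ uIcc (-(max |c| |d|)) (max |c| |d|) := by
    rw [uIcc_of_le (by linarith)]
    have := abs_le.mp (le_max_right |c| |d|)
    exact ⟨this.1, this.2⟩
  exact uIcc_subset_uIcc hcm hdm

lemma intOnIcc {r : ℝ} (hr : (-1:ℝ) < r) (y a b : ℝ) :
    IntegrableOn (fun z => |y - z| ^ r) (Set.Icc a b) volume := by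
  rcases le_or_gt a b with hab | hab
  · have h := (absRpowII hr (y - a) (y - b)).comp_sub_left y
    simp only [sub_sub_cancel] at h
    rw [intervalIntegrable_iff, uIoc_of_le hab] at h
    exact (integrableOn_Icc_iff_integrableOn_Ioc).mpr h
  · rw [Set.Icc_eq_empty (not_le.mpr hab)]
    exact integrableOn_empty

lemma intIccVal {α : ℝ} (hα : 0 < α) (hα1 : α < 1) (y m : ℝ) (hm : 0 ≤ m) :
    ∫ z in Set.Icc (y - m) (y + m), |y - z| ^ (-α) = 2 * m ^ (1 - α) / (1 - α) := by
  have hr : (-1:ℝ) < -α := by linarith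
  rw [MeasureTheory.integral_Icc_eq_integral_Ioc,
    ← intervalIntegral.integral_of_le (by linarith : y - m ≤ y + m)]
  rw [intervalIntegral.integral_comp_sub_left (fun u => |u| ^ (-α)) y]
  have hsplit : (∫ u in (y - (y+m))..(y - (y - m)), |u| ^ (-α)) = (∫ u in (-m)..(0:ℝ), |u| ^ (-α)) + ∫ u in (0:ℝ)..m, |u| ^ (-α) := by
    rw [show y - (y + m) = -m by ring, show y - (y - m) = m by ring]
    exact (intervalIntegral.integral_add_adjacent_intervals (absRpowII hr _ _) (absRpowII hr _ _)).symm
  rw [hsplit]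
  have hneg : (∫ u in (-m)..(0:ℝ), |u| ^ (-α)) = ∫ u in (0:ℝ)..m, |u| ^ (-α) := by
    have h2 := intervalIntegral.integral_comp_neg (a := (0:ℝ)) (b := m) (fun u => |u| ^ (-α))
    simp only [abs_neg, neg_zero] at h2
    exact h2.symm
  have hval : (∫ u in (0:ℝ)..m, |u| ^ (-α)) = m ^ (1 - α) / (1 - α) := by
    have h1 : (∫ u in (0:ℝ)..m, |u| ^ (-α)) = ∫ u in (0:ℝ)..m, u ^ (-α) := by
      refine intervalIntegral.integral_congr (fun u hu => ?_)
      rw [uIcc_of_le hm] at hu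
      rw [abs_of_nonneg hu.1]
    rw [h1, integral_rpow (Or.inl hr)]
    rw [Real.zero_rpow (by linarith : -α + 1 ≠ 0)]
    ring_nf
  rw [hneg, hval]
  ring

def Eset (s x x' : ℝ) : Set ℝ :=
  (Set.uIcc (x - s) (x' - s) ∪ Set.uIcc (x + s) (x' + s)) ∩
    (Set.Icc (x - s) (x + s) ∪ Set.Icc (x' - s) (x' + s))

lemma Eset_measurable (s x x' : ℝ) : MeasurableSet (Eset s x x') :=
  ((measurableSet_uIcc.union measurableSet_uIcc).inter
    (measurableSet_Icc.union measurableSet_Icc))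

lemma Eset_subset (s x x' : ℝ) :
    Eset s x x' ⊆ Set.Icc (min (x - s) (x' - s)) (max (x + s) (x' + s)) := by
  intro u hu
  rcases hu.2 with h | h
  · exact ⟨le_trans (min_le_left _ _) h.1, le_trans h.2 (le_max_left _ _)⟩
  · exact ⟨le_trans (min_le_right _ _) h.1, le_trans h.2 (le_max_right _ _)⟩

lemma mem_Eset {s x x' u : ℝ} (h1 : |x - u| < s) (h2 : ¬ |x' - u| < s) :
    u ∈ Eset s x x' := by
  rw [abs_lt] at h1
  rw [abs_lt, not_and_or, not_lt, not_lt] at h2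
  have hu1 : x - s < u := by linarith [h1.1]
  have hu2 : u < x + s := by linarith [h1.2]
  refine ⟨?_, Or.inl ⟨hu1.le, hu2.le⟩⟩
  rcases h2 with h | h
  · right
    exact Set.mem_uIcc.mpr (Or.inr ⟨by linarith, hu2.le⟩)
  · left
    exact Set.mem_uIcc.mpr (Or.inl ⟨hu1.le, by linarith⟩)

lemma Eset_comm (s x x' : ℝ) : Eset s x' x = Eset s x x' := by
  unfold Eset
  rw [Set.uIcc_comm (x' - s), Set.uIcc_comm (x' + s), Set.union_comm (Set.Icc (x' - s) _)]

lemma waveKernel_diff_le (s x x' u : ℝ) :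
    |waveKernel s (x - u) - waveKernel s (x' - u)| ≤
      (1/2) * (Eset s x x').indicator (fun _ => (1:ℝ)) u := by
  by_cases hu : u ∈ Eset s x x'
  · rw [Set.indicator_of_mem hu]
    unfold waveKernel
    split_ifs <;> norm_num [abs_le]
  · rw [Set.indicator_of_notMem hu]
    have : waveKernel s (x - u) = waveKernel s (x' - u) := by
      unfold waveKernel
      by_cases h1 : |x - u| < s <;> by_cases h2 : |x' - u| < s
      · simp [h1, h2]
      · exact absurd (mem_Eset h1 h2) hu
      · exact absurd (mem_Eset h2 h1) (by rwa [Eset_comm])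
      · simp [h1, h2]
    rw [this, sub_self, abs_zero]
    norm_num

lemma volume_Eset_le (s x x' : ℝ) (hs : 0 < s) :
    volume (Eset s x x') ≤ ENNReal.ofReal (2 * min |x - x'| (2 * s)) := by
  rcases le_or_gt |x - x'| (2*s) with hle | hlt
  · rw [min_eq_left hle]
    calc volume (Eset s x x') ≤ volume (Set.uIcc (x - s) (x' - s) ∪ Set.uIcc (x + s) (x' + s)) :=
          measure_mono Set.inter_subset_left
      _ ≤ volume (Set.uIcc (x - s) (x' - s)) + volume (Set.uIcc (x + s) (x' + s)) :=
          measure_union_le _ _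
      _ ≤ ENNReal.ofReal (2 * |x - x'|) := by
          rw [Real.volume_interval, Real.volume_interval,
            show x' - s - (x - s) = -(x - x') by ring, show x' + s - (x + s) = -(x - x') by ring,
            abs_neg, ← ENNReal.ofReal_add (abs_nonneg _) (abs_nonneg _)]
          exact ENNReal.ofReal_le_ofReal (by linarith)
  · rw [min_eq_right hlt.le]
    calc volume (Eset s x x') ≤ volume (Set.Icc (x - s) (x + s) ∪ Set.Icc (x' - s) (x' + s)) :=
          measure_mono Set.inter_subset_right
      _ ≤ volume (Set.Icc (x - s) (x + s)) + volume (Set.Icc (x' - s) (x' + s)) :=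
          measure_union_le _ _
      _ ≤ ENNReal.ofReal (2 * (2 * s)) := by
          rw [Real.volume_Icc, Real.volume_Icc,
            show x + s - (x - s) = 2*s by ring, show x' + s - (x' - s) = 2*s by ring,
            ← ENNReal.ofReal_add (by linarith) (by linarith)]
          exact ENNReal.ofReal_le_ofReal (by linarith)

lemma J_bound {α m y : ℝ} (hα0 : 0 < α) (hα1 : α < 1) (hm : 0 < m)
    {E : Set ℝ} (hEmeas : MeasurableSet E) (hEvol : volume E ≤ ENNReal.ofReal m)
    (hEint : IntegrableOn (fun z => |y - z| ^ (-α)) E volume) :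
    (∫ z in E, |y - z| ^ (-α)) ≤ 2 * m ^ (1 - α) / (1 - α) + m ^ (1 - α) := by
  have hr : (-1:ℝ) < -α := by linarith
  have hEfin : volume E < ⊤ := lt_of_le_of_lt hEvol ENNReal.ofReal_lt_top
  have hIint : IntegrableOn (fun z => |y - z| ^ (-α)) (Set.Icc (y - m) (y + m)) volume :=
    intOnIcc hr y _ _
  have hind : Integrable ((Set.Icc (y - m) (y + m)).indicator fun z => |y - z| ^ (-α)) volume :=
    hIint.integrable_indicator measurableSet_Icc
  have hconst : IntegrableOn (fun _ : ℝ => m ^ (-α)) E volume :=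
    integrableOn_const hEfin.ne
  have hgint : IntegrableOn
      (fun z => (Set.Icc (y - m) (y + m)).indicator (fun z' => |y - z'| ^ (-α)) z + m ^ (-α))
      E volume := hind.integrableOn.add hconst
  have hpt : ∀ z ∈ E, |y - z| ^ (-α) ≤
      (Set.Icc (y - m) (y + m)).indicator (fun z' => |y - z'| ^ (-α)) z + m ^ (-α) := by
    intro z hz
    by_cases hzI : z ∈ Set.Icc (y - m) (y + m)
    · rw [Set.indicator_of_mem hzI]
      exact le_add_of_nonneg_right (Real.rpow_nonneg hm.le _)
    · rw [Set.indicator_of_notMem hzI, zero_add]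
      have hlt : m < |y - z| := by
        rw [Set.mem_Icc, not_and_or, not_le, not_le] at hzI
        rcases hzI with h | h
        · exact lt_of_lt_of_le (by linarith) (le_abs_self _)
        · exact lt_of_lt_of_le (show m < -(y - z) by linarith) (neg_le_abs _)
      exact Real.rpow_le_rpow_of_nonpos hm hlt.le (by linarith)
  have h1 := setIntegral_mono_on hEint hgint hEmeas hpt
  rw [integral_add hind.integrableOn hconst] at h1
  have h2 : (∫ z in E, (Set.Icc (y - m) (y + m)).indicator (fun z' => |y - z'| ^ (-α)) z)
      ≤ 2 * m ^ (1 - α) / (1 - α) := by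
    have h3 := setIntegral_le_integral (s := E) hind
      (ae_of_all _ (fun z => Set.indicator_nonneg (fun z' _ => Real.rpow_nonneg (abs_nonneg _) _) z))
    have h3' : (∫ x, (Set.Icc (y - m) (y + m)).indicator (fun z' => |y - z'| ^ (-α)) x)
        = 2 * m ^ (1 - α) / (1 - α) := by
      rw [integral_indicator measurableSet_Icc, intIccVal hα0 hα1 y m hm.le]
    exact le_trans h3 (le_of_eq h3')
  have h4 : (∫ _ in E, m ^ (-α) : ℝ) ≤ m ^ (1 - α) := by
    rw [setIntegral_const]
    have h5 : (volume E).toReal ≤ m := ENNReal.toReal_le_of_le_ofReal hm.le hEvol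
    calc (volume E).toReal • m ^ (-α) ≤ m * m ^ (-α) := by
          rw [smul_eq_mul]
          exact mul_le_mul_of_nonneg_right h5 (Real.rpow_nonneg hm.le _)
      _ = m ^ (1 - α) := by
          rw [show (1:ℝ) - α = 1 + (-α) by ring, Real.rpow_add hm, Real.rpow_one]
  linarith

lemma Fs_bound {α : ℝ} (c : ℝ) (hα0 : 0 < α) (hα1 : α < 1) (hc0 : 0 ≤ c)
    (x x' s : ℝ) (hs : 0 < s) (hd : 0 < |x - x'|) :
    (∫ y : ℝ, ∫ z : ℝ,
        |waveKernel s (x - y) - waveKernel s (x' - y)| * (c * |y - z| ^ (-α)) *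
          |waveKernel s (x - z) - waveKernel s (x' - z)|)
      ≤ (2 * min |x - x'| (2 * s)) * ((c / 4) *
          (2 * (2 * min |x - x'| (2 * s)) ^ (1 - α) / (1 - α)
            + (2 * min |x - x'| (2 * s)) ^ (1 - α))) := by
  have hr : (-1:ℝ) < -α := by linarith
  set m : ℝ := 2 * min |x - x'| (2 * s) with hmdef
  set J : ℝ := 2 * m ^ (1 - α) / (1 - α) + m ^ (1 - α) with hJdef
  set E : Set ℝ := Eset s x x' with hEdef
  have hm : 0 < m := by
    have : 0 < min |x - x'| (2 * s) := lt_min hd (by linarith)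
    simp only [hmdef]; linarith
  have hEmeas : MeasurableSet E := Eset_measurable s x x'
  have hEvol : volume E ≤ ENNReal.ofReal m := volume_Eset_le s x x' hs
  have hEfin : volume E < ⊤ := lt_of_le_of_lt hEvol ENNReal.ofReal_lt_top
  have hEint : ∀ y : ℝ, IntegrableOn (fun z => |y - z| ^ (-α)) E volume := fun y =>
    (intOnIcc hr y (min (x - s) (x' - s)) (max (x + s) (x' + s))).mono_set (Eset_subset s x x')
  have hJle : ∀ y : ℝ, (∫ z in E, |y - z| ^ (-α)) ≤ J := fun y =>
    J_bound hα0 hα1 hm hEmeas hEvol (hEint y)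
  have hJ0 : 0 ≤ J := by
    have h1 : (0:ℝ) ≤ m ^ (1 - α) := Real.rpow_nonneg hm.le _
    have h2 : (0:ℝ) ≤ 2 * m ^ (1 - α) / (1 - α) := by
      apply div_nonneg (by linarith) (by linarith)
    simp only [hJdef]; linarith
  have hind0 : ∀ u : ℝ, (0:ℝ) ≤ E.indicator (fun _ => (1:ℝ)) u := fun u =>
    Set.indicator_nonneg (fun _ _ => zero_le_one) u
  have hfnn : ∀ y z : ℝ, (0:ℝ) ≤
      |waveKernel s (x - y) - waveKernel s (x' - y)| * (c * |y - z| ^ (-α)) *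
        |waveKernel s (x - z) - waveKernel s (x' - z)| := fun y z =>
    mul_nonneg (mul_nonneg (abs_nonneg _)
      (mul_nonneg hc0 (Real.rpow_nonneg (abs_nonneg _) _))) (abs_nonneg _)
  have hzlev : ∀ y : ℝ, (∫ z : ℝ,
      |waveKernel s (x - y) - waveKernel s (x' - y)| * (c * |y - z| ^ (-α)) *
        |waveKernel s (x - z) - waveKernel s (x' - z)|)
      ≤ E.indicator (fun _ => (1:ℝ)) y * ((c / 4) * J) := by
    intro y
    have hgi : Integrable (fun z =>
        (E.indicator (fun _ => (1:ℝ)) y * (c / 4)) *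
          E.indicator (fun z' => |y - z'| ^ (-α)) z) volume :=
      (((hEint y).integrable_indicator hEmeas)).const_mul _
    have hpt : ∀ z : ℝ,
        |waveKernel s (x - y) - waveKernel s (x' - y)| * (c * |y - z| ^ (-α)) *
          |waveKernel s (x - z) - waveKernel s (x' - z)|
        ≤ (E.indicator (fun _ => (1:ℝ)) y * (c / 4)) *
            E.indicator (fun z' => |y - z'| ^ (-α)) z := by
      intro z
      have hM : (0:ℝ) ≤ c * |y - z| ^ (-α) :=
        mul_nonneg hc0 (Real.rpow_nonneg (abs_nonneg _) _)
      calc |waveKernel s (x - y) - waveKernel s (x' - y)| * (c * |y - z| ^ (-α)) *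
            |waveKernel s (x - z) - waveKernel s (x' - z)|
          ≤ ((1/2) * E.indicator (fun _ => (1:ℝ)) y) * (c * |y - z| ^ (-α)) *
            ((1/2) * E.indicator (fun _ => (1:ℝ)) z) := by
            apply mul_le_mul
            · exact mul_le_mul_of_nonneg_right (waveKernel_diff_le s x x' y) hM
            · exact waveKernel_diff_le s x x' z
            · exact abs_nonneg _
            · exact mul_nonneg (mul_nonneg (by norm_num) (hind0 y)) hM
        _ = (E.indicator (fun _ => (1:ℝ)) y * (c / 4)) *
              (E.indicator (fun _ => (1:ℝ)) z * |y - z| ^ (-α)) := by ring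
        _ = (E.indicator (fun _ => (1:ℝ)) y * (c / 4)) *
              E.indicator (fun z' => |y - z'| ^ (-α)) z := by
            by_cases hzE : z ∈ E
            · simp [Set.indicator_of_mem hzE]
            · simp [Set.indicator_of_notMem hzE]
    refine le_trans (integral_mono_of_nonneg (ae_of_all _ (hfnn y)) hgi (ae_of_all _ hpt)) ?_
    rw [integral_const_mul, integral_indicator hEmeas]
    have hml := mul_le_mul_of_nonneg_left (hJle y)
      (mul_nonneg (hind0 y) (show (0:ℝ) ≤ c / 4 by linarith))
    exact le_trans hml (le_of_eq (mul_assoc _ _ _))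
  have hg2i : Integrable (fun y => E.indicator (fun _ => (1:ℝ)) y * ((c / 4) * J)) volume :=
    ((integrableOn_const hEfin.ne).integrable_indicator hEmeas).mul_const _
  refine le_trans (integral_mono_of_nonneg
    (ae_of_all _ (fun y => integral_nonneg (hfnn y))) hg2i (ae_of_all _ hzlev)) ?_
  rw [integral_mul_const]
  have hvol : (∫ y : ℝ, E.indicator (fun _ => (1:ℝ)) y) = (volume E).toReal := by
    rw [integral_indicator hEmeas]
    simp [measureReal_def]
  rw [hvol]
  exact mul_le_mul_of_nonneg_right (ENNReal.toReal_le_of_le_ofReal hm.le hEvol)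
    (mul_nonneg (by linarith) hJ0)

lemma Gamma_le_inv {α : ℝ} (hα0 : 0 < α) (hα1 : α < 1) : Real.Gamma α ≤ 1 / α := by
  have key : Real.Gamma (α + 1) ≤ 1 := by
    have h := Real.convexOn_Gamma.2 (Set.mem_Ioi.mpr one_pos) (Set.mem_Ioi.mpr two_pos)
      (by linarith : (0:ℝ) ≤ 1 - α) hα0.le (by ring : (1 - α) + α = 1)
    simp only [smul_eq_mul, Real.Gamma_one, Real.Gamma_two, mul_one] at h
    rw [show (1:ℝ) - α + α * 2 = α + 1 by ring] at h
    linarith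
  rw [Real.Gamma_add_one hα0.ne'] at key
  rw [le_div_iff₀ hα0, mul_comm]
  exact key

lemma riesz_nonneg {α : ℝ} (hα0 : 0 < α) (hα1 : α < 1) : 0 ≤ rieszConst (1 - α) := by
  unfold rieszConst
  rw [show (1:ℝ) - (1 - α) = α by ring]
  have hπ := Real.pi_pos
  apply div_nonneg _ hπ.le
  apply mul_nonneg
  · apply Real.sin_nonneg_of_nonneg_of_le_pi
    · nlinarith
    · nlinarith
  · exact (Real.Gamma_pos_of_pos hα0).le

lemma riesz_le {α αb : ℝ} (hαb : 0 < αb) (hαl : αb ≤ α) (hα1 : α < 1) :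
    rieszConst (1 - α) ≤ (1 - α) / (2 * αb) := by
  have hα0 : 0 < α := lt_of_lt_of_le hαb hαl
  unfold rieszConst
  rw [show (1:ℝ) - (1 - α) = α by ring]
  have hπ := Real.pi_pos
  have hsin : Real.sin ((1 - α) * π / 2) ≤ (1 - α) * π / 2 := Real.sin_le (by nlinarith)
  have hΓ : Real.Gamma α ≤ 1 / αb :=
    le_trans (Gamma_le_inv hα0 hα1) (one_div_le_one_div_of_le hαb hαl)
  have hΓ0 : 0 < Real.Gamma α := Real.Gamma_pos_of_pos hα0
  have h1 : Real.sin ((1 - α) * π / 2) * Real.Gamma α ≤ ((1 - α) * π / 2) * (1 / αb) :=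
    mul_le_mul hsin hΓ hΓ0.le (by nlinarith)
  calc Real.sin ((1 - α) * π / 2) * Real.Gamma α / π ≤ ((1 - α) * π / 2) * (1 / αb) / π :=
        (div_le_div_iff_of_pos_right hπ).mpr h1
    _ = (1 - α) / (2 * αb) := by field_simp

lemma per_s_bound {α αb T c d s : ℝ} (hαb : 0 < αb) (hαl : αb ≤ α) (hα1 : α < 1)
    (hc0 : 0 ≤ c) (hcle : c ≤ (1 - α) / (2 * αb))
    (hd : 0 < d) (hs : 0 < s) (hsT : s ≤ T) (hT : 0 < T) :
    (2 * min d (2 * s)) * ((c / 4) *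
        (2 * (2 * min d (2 * s)) ^ (1 - α) / (1 - α) + (2 * min d (2 * s)) ^ (1 - α)))
      ≤ (3 / (8 * αb) * (2 * max 1 (2 * T)) ^ 2) * (min d 1) ^ (2 - α) := by
  have hα0 : 0 < α := lt_of_lt_of_le hαb hαl
  have h1α : (0:ℝ) < 1 - α := by linarith
  set m : ℝ := 2 * min d (2 * s) with hmdef
  set w : ℝ := min d 1 with hwdef
  set M : ℝ := max 1 (2 * T) with hMdef
  have hM1 : (1:ℝ) ≤ M := le_max_left _ _
  have hw0 : 0 < w := lt_min hd one_pos
  have hm0 : 0 < m := by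
    have h0 : 0 < min d (2 * s) := lt_min hd (by linarith)
    simp only [hmdef]; linarith
  have hmw : m ≤ 2 * M * w := by
    rcases le_total d 1 with hd1 | hd1
    · have hw : w = d := min_eq_left hd1
      have h1 : min d (2 * s) ≤ d := min_le_left _ _
      have hMw : w ≤ M * w := le_mul_of_one_le_left hw0.le hM1
      simp only [hmdef]
      rw [hw] at hMw ⊢
      linarith
    · have hw : w = 1 := min_eq_right hd1
      have h1 : min d (2 * s) ≤ 2 * s := min_le_right _ _
      have h3 : 2 * T ≤ M := le_max_right _ _
      simp only [hmdef]
      rw [hw]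
      nlinarith
  have hpow : m ^ (1 - α) * m = m ^ (2 - α) := by
    have h := (Real.rpow_add hm0 (1 - α) 1).symm
    rw [Real.rpow_one, show (1 - α) + 1 = 2 - α by ring] at h
    exact h
  have hfac : c / 4 * ((3 - α) / (1 - α)) ≤ 3 / (8 * αb) := by
    have h1 : (0:ℝ) ≤ (3 - α) / (1 - α) := div_nonneg (by linarith) h1α.le
    have h2 : c / 4 * ((3 - α) / (1 - α)) ≤ ((1 - α) / (2 * αb)) / 4 * ((3 - α) / (1 - α)) :=
      mul_le_mul_of_nonneg_right (by linarith) h1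
    have h3 : ((1 - α) / (2 * αb)) / 4 * ((3 - α) / (1 - α)) = (3 - α) / (8 * αb) := by
      field_simp
      ring
    have h4 : (3 - α) / (8 * αb) ≤ 3 / (8 * αb) :=
      (div_le_div_iff_of_pos_right (by positivity : (0:ℝ) < 8 * αb)).mpr (by linarith)
    rw [h3] at h2
    linarith
  have hpowb : m ^ (2 - α) ≤ (2 * M) ^ 2 * w ^ (2 - α) := by
    have h1 : m ^ (2 - α) ≤ (2 * M * w) ^ (2 - α) :=
      Real.rpow_le_rpow hm0.le hmw (by linarith)
    have h2 : (2 * M * w) ^ (2 - α) = (2 * M) ^ (2 - α) * w ^ (2 - α) :=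
      Real.mul_rpow (by linarith) hw0.le
    have h3 : (2 * M) ^ (2 - α) ≤ (2 * M) ^ ((2:ℕ):ℝ) :=
      Real.rpow_le_rpow_of_exponent_le (by linarith) (by push_cast; linarith)
    rw [Real.rpow_natCast] at h3
    have h4 : (0:ℝ) ≤ w ^ (2 - α) := Real.rpow_nonneg hw0.le _
    calc m ^ (2 - α) ≤ (2 * M) ^ (2 - α) * w ^ (2 - α) := h2 ▸ h1
      _ ≤ (2 * M) ^ 2 * w ^ (2 - α) := mul_le_mul_of_nonneg_right h3 h4
  have hLHS : m * ((c / 4) * (2 * m ^ (1 - α) / (1 - α) + m ^ (1 - α)))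
      = (c / 4 * ((3 - α) / (1 - α))) * m ^ (2 - α) := by
    rw [← hpow]
    field_simp
    ring
  rw [hLHS]
  calc (c / 4 * ((3 - α) / (1 - α))) * m ^ (2 - α)
      ≤ (3 / (8 * αb)) * ((2 * M) ^ 2 * w ^ (2 - α)) := by
        apply mul_le_mul hfac hpowb (Real.rpow_nonneg hm0.le _) (by positivity)
    _ = (3 / (8 * αb) * (2 * M) ^ 2) * w ^ (2 - α) := by ring

theorem stmt_9 (T αb : ℝ) (hT : 0 < T) (hαb : 0 < αb) (hαb1 : αb < 1) :
    ∃ C : ℝ, 0 < C ∧ ∀ α : ℝ, αb ≤ α → α < 1 → ∀ x x' t : ℝ, t ∈ Set.Icc 0 T →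
      (∫ s in Set.Ioc 0 t, ∫ y : ℝ, ∫ z : ℝ,
          |waveKernel s (x - y) - waveKernel s (x' - y)| *
            (rieszConst (1 - α) * |y - z| ^ (-α)) *
            |waveKernel s (x - z) - waveKernel s (x' - z)|) ≤
        C * (min |x - x'| 1) ^ (2 - α) := by
  refine ⟨T * (3 / (8 * αb) * (2 * max 1 (2 * T)) ^ 2), ?_, ?_⟩
  · have hM : (0:ℝ) < max 1 (2 * T) := lt_of_lt_of_le one_pos (le_max_left _ _)
    positivity
  intro α hαl hα1 x x' t ht
  have hα0 : 0 < α := lt_of_lt_of_le hαb hαl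
  by_cases hxx : x = x'
  · subst hxx
    simp only [sub_self, abs_zero, zero_mul, mul_zero, integral_zero]
    rw [min_eq_left zero_le_one, Real.zero_rpow (by linarith : (2:ℝ) - α ≠ 0), mul_zero]
  · have hd : 0 < |x - x'| := abs_pos.mpr (sub_ne_zero.mpr hxx)
    have hc0 : 0 ≤ rieszConst (1 - α) := riesz_nonneg hα0 hα1
    have hcle : rieszConst (1 - α) ≤ (1 - α) / (2 * αb) := riesz_le hαb hαl hα1
    have hfnn : ∀ s y z : ℝ, (0:ℝ) ≤
        |waveKernel s (x - y) - waveKernel s (x' - y)| * (rieszConst (1 - α) * |y - z| ^ (-α)) *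
          |waveKernel s (x - z) - waveKernel s (x' - z)| := fun s y z =>
      mul_nonneg (mul_nonneg (abs_nonneg _)
        (mul_nonneg hc0 (Real.rpow_nonneg (abs_nonneg _) _))) (abs_nonneg _)
    have hgi : IntegrableOn
        (fun _ : ℝ => 3 / (8 * αb) * (2 * max 1 (2 * T)) ^ 2 * (min |x - x'| 1) ^ (2 - α))
        (Set.Ioc 0 t) volume :=
      integrableOn_const measure_Ioc_lt_top.ne
    have hmono : ∀ᵐ s ∂(volume.restrict (Set.Ioc 0 t)),
        (∫ y : ℝ, ∫ z : ℝ,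
          |waveKernel s (x - y) - waveKernel s (x' - y)| *
            (rieszConst (1 - α) * |y - z| ^ (-α)) *
            |waveKernel s (x - z) - waveKernel s (x' - z)|)
          ≤ 3 / (8 * αb) * (2 * max 1 (2 * T)) ^ 2 * (min |x - x'| 1) ^ (2 - α) := by
      filter_upwards [ae_restrict_mem measurableSet_Ioc] with s hs
      refine le_trans (Fs_bound (rieszConst (1 - α)) hα0 hα1 hc0 x x' s hs.1 hd) ?_
      exact per_s_bound hαb hαl hα1 hc0 hcle hd hs.1 (le_trans hs.2 ht.2) hT
    refine le_trans (integral_mono_of_nonneg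
      (ae_of_all _ (fun s => integral_nonneg (fun y => integral_nonneg (fun z => hfnn s y z))))
      hgi hmono) ?_
    rw [setIntegral_const, Real.volume_real_Ioc_of_le ht.1, sub_zero, smul_eq_mul]
    have hrpow : (0:ℝ) ≤ 3 / (8 * αb) * (2 * max 1 (2 * T)) ^ 2 * (min |x - x'| 1) ^ (2 - α) := by
      have hM : (0:ℝ) < max 1 (2 * T) := lt_of_lt_of_le one_pos (le_max_left _ _)
      have := Real.rpow_nonneg (le_min (abs_nonneg (x - x')) zero_le_one) (2 - α)
      positivity
    calc t * (3 / (8 * αb) * (2 * max 1 (2 * T)) ^ 2 * (min |x - x'| 1) ^ (2 - α))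
        ≤ T * (3 / (8 * αb) * (2 * max 1 (2 * T)) ^ 2 * (min |x - x'| 1) ^ (2 - α)) :=
          mul_le_mul_of_nonneg_right ht.2 hrpow
      _ = T * (3 / (8 * αb) * (2 * max 1 (2 * T)) ^ 2) * (min |x - x'| 1) ^ (2 - α) := by ring
end

section
/- For α ∈ (0,1), x ∈ ℝ and 0 ≤ t ≤ t' ≤ T, the quantity B_α := ∫₀ᵗ ∫_ℝ ∫_ℝ |G_{s+(t'−t)}(x−y) − G_s(x−y)| · c_{1−α}|y−z|^{−α} · |G_{s+(t'−t)}(x−z) − G_s(x−z)| dy dz ds satisfies B_α ≤ C · (min(t'−t, 1))^{2−α}, with C depending only on T and a lower bound for α. -/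
open MeasureTheory Real

private lemma aux_key_int {y h α : ℝ} (hh : 0 < h) (hα1 : α < 1) :
    IntegrableOn (fun z => |y - z| ^ (-α)) (Set.Ioo (y - h) (y + h)) ∧
      ∫ z in Set.Ioo (y - h) (y + h), |y - z| ^ (-α) = 2 * (h ^ (1 - α) / (1 - α)) := by
  have hr : (-1 : ℝ) < -α := by linarith
  have base : IntervalIntegrable (fun u : ℝ => u ^ (-α)) volume 0 h :=
    intervalIntegral.intervalIntegrable_rpow' hr
  have baseval : (∫ u in (0:ℝ)..h, u ^ (-α)) = h ^ (1 - α) / (1 - α) := by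
    rw [integral_rpow (Or.inl hr), Real.zero_rpow (by linarith : -α + 1 ≠ 0),
      show -α + 1 = 1 - α by ring, sub_zero]
  have I1 : IntervalIntegrable (fun z => |y - z| ^ (-α)) volume (y - h) y := by
    have c1 : IntervalIntegrable (fun z => (y - z) ^ (-α)) volume (y - h) y := by
      have := (base.comp_sub_left y).symm
      simpa using this
    refine c1.congr ?_
    rw [Set.uIoc_of_le (by linarith : y - h ≤ y)]
    intro z hz
    dsimp only
    rw [abs_of_nonneg (by linarith [hz.2] : (0:ℝ) ≤ y - z)]
  have I1val : (∫ z in (y - h)..y, |y - z| ^ (-α)) = h ^ (1 - α) / (1 - α) := by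
    have hcg : (∫ z in (y - h)..y, |y - z| ^ (-α)) = ∫ z in (y - h)..y, (y - z) ^ (-α) := by
      apply intervalIntegral.integral_congr
      intro z hz
      rw [Set.uIcc_of_le (by linarith : y - h ≤ y)] at hz
      simp only
      rw [abs_of_nonneg (by linarith [hz.2] : (0:ℝ) ≤ y - z)]
    rw [hcg, intervalIntegral.integral_comp_sub_left (fun u : ℝ => u ^ (-α)) y]
    simpa using baseval
  have I2 : IntervalIntegrable (fun z => |y - z| ^ (-α)) volume y (y + h) := by
    have c2 : IntervalIntegrable (fun z => (z - y) ^ (-α)) volume y (y + h) := by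
      have := base.comp_sub_right y
      simpa [add_comm] using this
    refine c2.congr ?_
    rw [Set.uIoc_of_le (by linarith : y ≤ y + h)]
    intro z hz
    dsimp only
    rw [abs_sub_comm, abs_of_nonneg (by linarith [hz.1] : (0:ℝ) ≤ z - y)]
  have I2val : (∫ z in y..(y + h), |y - z| ^ (-α)) = h ^ (1 - α) / (1 - α) := by
    have hcg : (∫ z in y..(y + h), |y - z| ^ (-α)) = ∫ z in y..(y + h), (z - y) ^ (-α) := by
      apply intervalIntegral.integral_congr
      intro z hz
      rw [Set.uIcc_of_le (by linarith : y ≤ y + h)] at hz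
      simp only
      rw [abs_sub_comm, abs_of_nonneg (by linarith [hz.1] : (0:ℝ) ≤ z - y)]
    rw [hcg, intervalIntegral.integral_comp_sub_right (fun u : ℝ => u ^ (-α)) y]
    simpa using baseval
  have hle : y - h ≤ y + h := by linarith
  have Itot : IntervalIntegrable (fun z => |y - z| ^ (-α)) volume (y - h) (y + h) :=
    I1.trans I2
  constructor
  · exact ((intervalIntegrable_iff_integrableOn_Ioc_of_le hle).1 Itot).mono_set
      Set.Ioo_subset_Ioc_self
  · rw [← MeasureTheory.integral_Ioc_eq_integral_Ioo, ← intervalIntegral.integral_of_le hle,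
      ← intervalIntegral.integral_add_adjacent_intervals I1 I2, I1val, I2val]
    ring

private lemma aux_wave_bound {s δ : ℝ} (hδ : 0 ≤ δ) (x w : ℝ) :
    |waveKernel (s + δ) (x - w) - waveKernel s (x - w)| ≤
      (Set.Ioo (x - (s + δ)) (x + (s + δ)) \ Set.Ioo (x - s) (x + s)).indicator
        (fun _ => (1:ℝ)/2) w := by
  unfold waveKernel
  by_cases h1 : |x - w| < s + δ <;> by_cases h2 : |x - w| < s
  · rw [if_pos h1, if_pos h2, sub_self, abs_zero]
    exact Set.indicator_nonneg (fun _ _ => by norm_num) w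
  · have hw : w ∈ Set.Ioo (x - (s + δ)) (x + (s + δ)) \ Set.Ioo (x - s) (x + s) := by
      rcases abs_lt.1 h1 with ⟨ha, hb⟩
      refine ⟨⟨by linarith, by linarith⟩, ?_⟩
      intro hw'
      rcases hw' with ⟨ha', hb'⟩
      exact h2 (abs_lt.2 ⟨by linarith, by linarith⟩)
    rw [Set.indicator_of_mem hw, if_pos h1, if_neg h2, sub_zero,
      abs_of_nonneg (by norm_num : (0:ℝ) ≤ 1/2)]
  · exact absurd (lt_of_lt_of_le h2 (by linarith)) h1
  · rw [if_neg h1, if_neg h2, sub_self, abs_zero]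
    exact Set.indicator_nonneg (fun _ _ => by norm_num) w

private lemma aux_vol {s δ : ℝ} (hs : 0 ≤ s) (hδ : 0 ≤ δ) (x : ℝ) :
    volume (Set.Ioo (x - (s + δ)) (x + (s + δ)) \ Set.Ioo (x - s) (x + s)) =
      ENNReal.ofReal (2 * δ) := by
  rw [measure_diff (Set.Ioo_subset_Ioo (by linarith) (by linarith))
      measurableSet_Ioo.nullMeasurableSet
      (by rw [Real.volume_Ioo]; exact ENNReal.ofReal_ne_top)]
  rw [Real.volume_Ioo, Real.volume_Ioo,
    ← ENNReal.ofReal_sub _ (by linarith : (0:ℝ) ≤ x + s - (x - s))]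
  congr 1
  ring

theorem stmt_10 (T αb : ℝ) (hT : 0 < T) (hαb : 0 < αb) (hαb1 : αb < 1) :
    ∃ C : ℝ, 0 < C ∧ ∀ α : ℝ, αb ≤ α → α < 1 → ∀ x t t' : ℝ,
      0 ≤ t → t ≤ t' → t' ≤ T →
      (∫ s in Set.Ioc 0 t, ∫ y : ℝ, ∫ z : ℝ,
          |waveKernel (s + (t' - t)) (x - y) - waveKernel s (x - y)| *
            (rieszConst (1 - α) * |y - z| ^ (-α)) *
            |waveKernel (s + (t' - t)) (x - z) - waveKernel s (x - z)|) ≤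
        C * (min (t' - t) 1) ^ (2 - α) := by
  refine ⟨max 1 (T ^ 2) * (T / αb),
    mul_pos (lt_of_lt_of_le one_pos (le_max_left _ _)) (div_pos hT hαb), ?_⟩
  intro α hαl hα1 x t t' ht0 htt' ht'T
  have hα0 : 0 < α := lt_of_lt_of_le hαb hαl
  set δ : ℝ := t' - t with hδdef
  have hδ0 : 0 ≤ δ := by rw [hδdef]; linarith
  rcases eq_or_lt_of_le hδ0 with hδz | hδ
  · -- trivial case δ = 0
    rw [← hδz]
    simp only [add_zero, sub_self, abs_zero, zero_mul, mul_zero, integral_zero]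
    rw [min_eq_left (by norm_num : (0:ℝ) ≤ 1),
      Real.zero_rpow (by linarith : (2:ℝ) - α ≠ 0), mul_zero]
  -- main case
  have hπ := Real.pi_pos
  have hΓpos : 0 < Real.Gamma α := Real.Gamma_pos_of_pos hα0
  set c : ℝ := rieszConst (1 - α) with hcdef
  have hc0 : 0 ≤ c := by
    rw [hcdef]; unfold rieszConst
    rw [show (1:ℝ) - (1 - α) = α by ring]
    apply div_nonneg _ hπ.le
    apply mul_nonneg _ hΓpos.le
    apply Real.sin_nonneg_of_nonneg_of_le_pi
    · apply div_nonneg (mul_nonneg (by linarith) hπ.le) (by norm_num)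
    · nlinarith
  have hc_le : c ≤ (1 - α) * Real.Gamma α / 2 := by
    rw [hcdef]; unfold rieszConst
    rw [show (1:ℝ) - (1 - α) = α by ring, div_le_iff₀ hπ]
    have hs := Real.sin_le (show (0:ℝ) ≤ (1 - α) * π / 2 by
      apply div_nonneg (mul_nonneg (by linarith) hπ.le) (by norm_num))
    calc Real.sin ((1 - α) * π / 2) * Real.Gamma α
        ≤ ((1 - α) * π / 2) * Real.Gamma α := mul_le_mul_of_nonneg_right hs hΓpos.le
      _ = (1 - α) * Real.Gamma α / 2 * π := by ring
  have hΓle : Real.Gamma α ≤ 1 / αb := by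
    have h2 : Real.Gamma (α + 1) ≤ 1 := by
      have hconv := Real.convexOn_Gamma
      have h := hconv.2 (Set.mem_Ioi.2 one_pos) (Set.mem_Ioi.2 two_pos)
        (by linarith : (0:ℝ) ≤ 1 - α) hα0.le (by ring : (1 - α) + α = 1)
      rw [smul_eq_mul, smul_eq_mul, smul_eq_mul, smul_eq_mul, Real.Gamma_one] at h
      have hG2 : Real.Gamma 2 = 1 := by
        rw [show (2:ℝ) = 1 + 1 by norm_num, Real.Gamma_add_one one_ne_zero, Real.Gamma_one,
          mul_one]
      rw [hG2] at h
      calc Real.Gamma (α + 1) = Real.Gamma ((1 - α) * 1 + α * 2) := by congr 1; ring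
        _ ≤ (1 - α) * 1 + α * 1 := h
        _ = 1 := by ring
    rw [Real.Gamma_add_one hα0.ne'] at h2
    rw [le_div_iff₀ hαb]
    nlinarith
  have h1α : 0 < 1 - α := by linarith
  have hE0 : 0 ≤ δ ^ (1 - α) := Real.rpow_nonneg hδ0 _
  set E : ℝ := δ ^ (1 - α) + δ ^ (1 - α) / (1 - α) with hEdef
  have hEnn : 0 ≤ E := by
    rw [hEdef]; exact add_nonneg hE0 (div_nonneg hE0 h1α.le)
  have hK0 : 0 ≤ c * E := mul_nonneg hc0 hEnn
  -- the key bound for each fixed s > 0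
  have key : ∀ s : ℝ, 0 < s →
      (∫ y : ℝ, ∫ z : ℝ,
        |waveKernel (s + δ) (x - y) - waveKernel s (x - y)| * (c * |y - z| ^ (-α)) *
          |waveKernel (s + δ) (x - z) - waveKernel s (x - z)|) ≤ δ * (c * E) := by
    intro s hs
    set S : Set ℝ := Set.Ioo (x - (s + δ)) (x + (s + δ)) \ Set.Ioo (x - s) (x + s) with hSdef
    have hSm : MeasurableSet S := measurableSet_Ioo.diff measurableSet_Ioo
    have hSvol : volume S = ENNReal.ofReal (2 * δ) := aux_vol hs.le hδ0 x
    have hSfin : volume S ≠ ⊤ := by rw [hSvol]; exact ENNReal.ofReal_ne_top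
    set A : ℝ → ℝ := fun w => |waveKernel (s + δ) (x - w) - waveKernel s (x - w)| with hA
    have hA0 : ∀ w, 0 ≤ A w := fun w => abs_nonneg _
    have hAle : ∀ w, A w ≤ S.indicator (fun _ => (1:ℝ)/2) w := fun w => aux_wave_bound hδ0 x w
    have lvl3 : ∀ y : ℝ, (∫ z : ℝ, A y * (c * |y - z| ^ (-α)) * A z) ≤ A y * (c * E) := by
      intro y
      obtain ⟨hInt, hVal⟩ := aux_key_int (y := y) (h := δ) hδ hα1
      set φ : ℝ → ℝ := fun z => A y * c * (S.indicator (fun _ => δ ^ (-α) / 2) z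
        + (1/2) * (Set.Ioo (y - δ) (y + δ)).indicator (fun z => |y - z| ^ (-α)) z) with hφ
      have hi1 : Integrable (S.indicator (fun _ => δ ^ (-α) / 2)) volume :=
        (integrable_indicator_iff hSm).2 (integrableOn_const hSfin)
      have hi2 : Integrable ((Set.Ioo (y - δ) (y + δ)).indicator
          (fun z => |y - z| ^ (-α))) volume :=
        (integrable_indicator_iff measurableSet_Ioo).2 hInt
      have hφint : Integrable φ volume := by
        rw [hφ]
        exact (hi1.add (hi2.const_mul _)).const_mul _
      have hpt : ∀ z : ℝ, A y * (c * |y - z| ^ (-α)) * A z ≤ φ z := by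
        intro z
        have hr0 : 0 ≤ |y - z| ^ (-α) := Real.rpow_nonneg (abs_nonneg _) _
        have hprod0 : 0 ≤ A y * (c * |y - z| ^ (-α)) :=
          mul_nonneg (hA0 y) (mul_nonneg hc0 hr0)
        have hind1 : 0 ≤ S.indicator (fun _ => δ ^ (-α) / 2) z :=
          Set.indicator_nonneg (fun _ _ => by positivity) z
        have hind2 : 0 ≤ (Set.Ioo (y - δ) (y + δ)).indicator (fun w => |y - w| ^ (-α)) z :=
          Set.indicator_nonneg (fun w _ => Real.rpow_nonneg (abs_nonneg _) _) z
        by_cases hz : z ∈ S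
        · have hAz : A z ≤ 1/2 := by
            have h := hAle z; rwa [Set.indicator_of_mem hz] at h
          have step1 : A y * (c * |y - z| ^ (-α)) * A z ≤
              A y * (c * |y - z| ^ (-α)) * (1/2) :=
            mul_le_mul_of_nonneg_left hAz hprod0
          by_cases hyz : |y - z| < δ
          · have hzmem : z ∈ Set.Ioo (y - δ) (y + δ) := by
              rcases abs_lt.1 hyz with ⟨ha, hb⟩
              exact ⟨by linarith, by linarith⟩
            refine step1.trans ?_
            rw [hφ]
            simp only
            rw [Set.indicator_of_mem hzmem]
            have : A y * (c * |y - z| ^ (-α)) * (1/2)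
                = A y * c * ((1/2) * |y - z| ^ (-α)) := by ring
            rw [this]
            apply mul_le_mul_of_nonneg_left _ (mul_nonneg (hA0 y) hc0)
            linarith
          · have hrle : |y - z| ^ (-α) ≤ δ ^ (-α) :=
              Real.rpow_le_rpow_of_nonpos hδ (not_lt.1 hyz) (by linarith)
            refine step1.trans ?_
            have step2 : A y * (c * |y - z| ^ (-α)) * (1/2) ≤ A y * c * (δ ^ (-α) / 2) := by
              have h6 : A y * (c * |y - z| ^ (-α)) ≤ A y * (c * δ ^ (-α)) :=
                mul_le_mul_of_nonneg_left (mul_le_mul_of_nonneg_left hrle hc0) (hA0 y)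
              calc A y * (c * |y - z| ^ (-α)) * (1/2)
                  ≤ A y * (c * δ ^ (-α)) * (1/2) :=
                    mul_le_mul_of_nonneg_right h6 (by norm_num)
                _ = A y * c * (δ ^ (-α) / 2) := by ring
            refine step2.trans ?_
            rw [hφ]
            simp only
            rw [Set.indicator_of_mem hz]
            apply mul_le_mul_of_nonneg_left _ (mul_nonneg (hA0 y) hc0)
            linarith
        · have hAz : A z = 0 := le_antisymm
            (by have h := hAle z; rwa [Set.indicator_of_notMem hz] at h) (hA0 z)
          rw [hAz, mul_zero]
          rw [hφ]
          exact mul_nonneg (mul_nonneg (hA0 y) hc0)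
            (add_nonneg hind1 (mul_nonneg (by norm_num) hind2))
      have hmono := integral_mono_of_nonneg
        (Filter.Eventually.of_forall fun z =>
          mul_nonneg (mul_nonneg (hA0 y)
            (mul_nonneg hc0 (Real.rpow_nonneg (abs_nonneg _) _))) (hA0 z))
        hφint (Filter.Eventually.of_forall hpt)
      refine hmono.trans ?_
      have hφval : (∫ z, φ z) = A y * c * E := by
        rw [hφ]
        rw [integral_const_mul]
        congr 1
        rw [integral_add hi1 (hi2.const_mul _), integral_const_mul,
          integral_indicator hSm, integral_indicator measurableSet_Ioo,
          setIntegral_const, hVal, measureReal_def, hSvol, ENNReal.toReal_ofReal (by linarith), smul_eq_mul]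
        have hpow : 2 * δ * (δ ^ (-α) / 2) = δ ^ (1 - α) := by
          rw [show (1:ℝ) - α = -α + 1 by ring, Real.rpow_add hδ, Real.rpow_one]
          ring
        rw [hpow, hEdef]
        ring
      rw [hφval, mul_assoc]
    -- level 2
    have hgint : Integrable (S.indicator (fun _ => c * E / 2)) volume :=
      (integrable_indicator_iff hSm).2 (integrableOn_const hSfin)
    have lvl2 : ∀ y : ℝ, (∫ z : ℝ, A y * (c * |y - z| ^ (-α)) * A z) ≤
        S.indicator (fun _ => c * E / 2) y := by
      intro y
      refine (lvl3 y).trans ?_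
      by_cases hy : y ∈ S
      · rw [Set.indicator_of_mem hy]
        have h := hAle y
        rw [Set.indicator_of_mem hy] at h
        calc A y * (c * E) ≤ (1/2) * (c * E) := mul_le_mul_of_nonneg_right h hK0
          _ = c * E / 2 := by ring
      · have hAy : A y = 0 := le_antisymm
          (by have h := hAle y; rwa [Set.indicator_of_notMem hy] at h) (hA0 y)
        rw [Set.indicator_of_notMem hy, hAy, zero_mul]
    have hmono2 := integral_mono_of_nonneg
      (Filter.Eventually.of_forall fun y => integral_nonneg fun z =>
        mul_nonneg (mul_nonneg (hA0 y)
          (mul_nonneg hc0 (Real.rpow_nonneg (abs_nonneg _) _))) (hA0 z))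
      hgint (Filter.Eventually.of_forall lvl2)
    refine hmono2.trans ?_
    rw [integral_indicator hSm, setIntegral_const, measureReal_def, hSvol,
      ENNReal.toReal_ofReal (by linarith), smul_eq_mul]
    apply le_of_eq
    ring
  -- put it together
  have top : (∫ s in Set.Ioc 0 t, ∫ y : ℝ, ∫ z : ℝ,
      |waveKernel (s + δ) (x - y) - waveKernel s (x - y)| * (c * |y - z| ^ (-α)) *
        |waveKernel (s + δ) (x - z) - waveKernel s (x - z)|) ≤ t * (δ * (c * E)) := by
    have hmono := integral_mono_of_nonneg (μ := volume.restrict (Set.Ioc 0 t))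
      (g := fun _ => δ * (c * E))
      (Filter.Eventually.of_forall fun s => integral_nonneg fun y => integral_nonneg fun z =>
        mul_nonneg (mul_nonneg (abs_nonneg _)
          (mul_nonneg hc0 (Real.rpow_nonneg (abs_nonneg _) _))) (abs_nonneg _))
      (integrableOn_const (by rw [Real.volume_Ioc]; exact ENNReal.ofReal_ne_top))
      ((ae_restrict_mem measurableSet_Ioc).mono fun s hs => key s hs.1)
    refine hmono.trans ?_
    rw [setIntegral_const, measureReal_def, Real.volume_Ioc, sub_zero, ENNReal.toReal_ofReal ht0, smul_eq_mul]
  refine top.trans ?_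
  -- final arithmetic
  have hEmul : E * (1 - α) = δ ^ (1 - α) * (2 - α) := by
    rw [hEdef]
    field_simp
    ring
  have hcE : c * E ≤ (1 / αb) * δ ^ (1 - α) := by
    have h2 : c * E ≤ ((1 - α) * Real.Gamma α / 2) * E := mul_le_mul_of_nonneg_right hc_le hEnn
    have h3 : ((1 - α) * Real.Gamma α / 2) * E = Real.Gamma α / 2 * (E * (1 - α)) := by ring
    rw [h3, hEmul] at h2
    refine h2.trans ?_
    have h6 : Real.Gamma α / 2 * (2 - α) ≤ 1 / αb := by
      calc Real.Gamma α / 2 * (2 - α) ≤ Real.Gamma α / 2 * 2 :=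
            mul_le_mul_of_nonneg_left (by linarith) (by positivity)
        _ = Real.Gamma α := by ring
        _ ≤ 1 / αb := hΓle
    calc Real.Gamma α / 2 * (δ ^ (1 - α) * (2 - α))
        = (Real.Gamma α / 2 * (2 - α)) * δ ^ (1 - α) := by ring
      _ ≤ (1 / αb) * δ ^ (1 - α) := mul_le_mul_of_nonneg_right h6 hE0
  have hδp : δ ^ (1 - α) * δ = δ ^ (2 - α) := by
    rw [show (2:ℝ) - α = (1 - α) + 1 by ring, Real.rpow_add hδ, Real.rpow_one]
  have hbound : δ * (c * E) ≤ (1 / αb) * δ ^ (2 - α) := by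
    calc δ * (c * E) ≤ δ * ((1 / αb) * δ ^ (1 - α)) := mul_le_mul_of_nonneg_left hcE hδ0
      _ = (1 / αb) * (δ ^ (1 - α) * δ) := by ring
      _ = (1 / αb) * δ ^ (2 - α) := by rw [hδp]
  have hfin1 : t * (δ * (c * E)) ≤ T * ((1 / αb) * δ ^ (2 - α)) := by
    have h0 : 0 ≤ δ * (c * E) := mul_nonneg hδ0 hK0
    calc t * (δ * (c * E)) ≤ T * (δ * (c * E)) :=
          mul_le_mul_of_nonneg_right (by linarith) h0
      _ ≤ T * ((1 / αb) * δ ^ (2 - α)) := mul_le_mul_of_nonneg_left hbound hT.le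
  refine hfin1.trans ?_
  have hTαb : 0 ≤ T / αb := (div_pos hT hαb).le
  rcases le_or_gt δ 1 with hδ1 | hδ1
  · rw [min_eq_left hδ1]
    have heq : T * ((1 / αb) * δ ^ (2 - α)) = (T / αb) * δ ^ (2 - α) := by ring
    rw [heq]
    have hmax : (1:ℝ) ≤ max 1 (T ^ 2) := le_max_left _ _
    have hx : 0 ≤ (T / αb) * δ ^ (2 - α) :=
      mul_nonneg hTαb (Real.rpow_nonneg hδ0 _)
    calc (T / αb) * δ ^ (2 - α) = 1 * ((T / αb) * δ ^ (2 - α)) := by ring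
      _ ≤ max 1 (T ^ 2) * ((T / αb) * δ ^ (2 - α)) := mul_le_mul_of_nonneg_right hmax hx
      _ = max 1 (T ^ 2) * (T / αb) * δ ^ (2 - α) := by ring
  · rw [min_eq_right hδ1.le, Real.one_rpow, mul_one]
    have hδT : δ ≤ T := by rw [hδdef]; linarith
    have h7 : δ ^ (2 - α) ≤ δ ^ (2:ℝ) :=
      Real.rpow_le_rpow_of_exponent_le hδ1.le (by linarith)
    have h8 : δ ^ (2:ℝ) = δ ^ 2 := by
      rw [show ((2:ℝ)) = ((2:ℕ):ℝ) by norm_num, Real.rpow_natCast]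
    have h9 : δ ^ 2 ≤ T ^ 2 := pow_le_pow_left₀ hδ0 hδT 2
    have h10 : δ ^ (2 - α) ≤ max 1 (T ^ 2) := by
      rw [h8] at h7
      exact h7.trans (h9.trans (le_max_right _ _))
    calc T * ((1 / αb) * δ ^ (2 - α)) = (T / αb) * δ ^ (2 - α) := by ring
      _ ≤ (T / αb) * max 1 (T ^ 2) := mul_le_mul_of_nonneg_left h10 hTαb
      _ = max 1 (T ^ 2) * (T / αb) := by ring
end

section
/- For any x ≤ x' and 0 ≤ t ≤ (x'−x)/2 and α ∈ (0,1), ∫₀ᵗ ∫_ℝ ∫_ℝ |G_s(x−y) − G_s(x'−y)| · c_{1−α}|y−z|^{−α} · |G_s(x−z) − G_s(x'−z)| dy dz ds ≤ c_{1−α}(2^{3−α}+2) / (2(1−α)(2−α)(3−α)) · (x'−x)^{3−α}. -/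
open MeasureTheory Real

section Aux
open Set intervalIntegral

lemma absRpow_ii {r : ℝ} (hr : -1 < r) (a b : ℝ) :
    IntervalIntegrable (fun z => |z| ^ r) volume a b := by
  have key : ∀ c : ℝ, 0 ≤ c → IntervalIntegrable (fun z => |z| ^ r) volume 0 c := by
    intro c hc
    refine (intervalIntegrable_rpow' hr (a := 0) (b := c)).congr ?_
    intro z hz
    rw [uIoc_of_le hc] at hz
    simp [abs_of_pos hz.1]
  have key2 : ∀ c : ℝ, IntervalIntegrable (fun z => |z| ^ r) volume 0 c := by
    intro c
    rcases le_total 0 c with hc | hc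
    · exact key c hc
    · have := (IntervalIntegrable.iff_comp_neg (f := fun z => |z| ^ r) (a := 0) (b := -c)).1 (key (-c) (by linarith))
      simp only [abs_neg, neg_zero, neg_neg] at this
      simpa using this
  exact (key2 a).symm.trans (key2 b)

lemma absShift_ii {r : ℝ} (hr : -1 < r) (y a b : ℝ) :
    IntervalIntegrable (fun z => |y - z| ^ r) volume a b := by
  have := (absRpow_ii hr (y - a) (y - b)).comp_sub_left y
  simpa using this

lemma absShift_int {r : ℝ} (hr : -1 < r) (y a b : ℝ) :
    IntegrableOn (fun z => |y - z| ^ r) (Ioo a b) volume :=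
  (absShift_ii hr y a b).1.mono_set Ioo_subset_Ioc_self

lemma rpow_piece' {r : ℝ} (hr : -1 < r) (c : ℝ) :
    ∫ u in (0:ℝ)..c, u ^ r = c ^ (r + 1) / (r + 1) := by
  rw [integral_rpow (Or.inl hr), Real.zero_rpow (by linarith)]
  ring

lemma inner_eq {α : ℝ} (hα : 0 < α) (hα1 : α < 1) (a b y : ℝ) (h1 : a ≤ y) (h2 : y ≤ b) :
    ∫ z in Ioo a b, |y - z| ^ (-α) = ((y - a) ^ (1 - α) + (b - y) ^ (1 - α)) / (1 - α) := by
  have hr : (-1:ℝ) < -α := by linarith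
  have hab : a ≤ b := le_trans h1 h2
  have e0 : ∫ z in Ioo a b, |y - z| ^ (-α) = ∫ z in a..b, |y - z| ^ (-α) := by
    rw [integral_of_le hab, integral_Ioc_eq_integral_Ioo]
  have i1 : IntervalIntegrable (fun z => |y - z| ^ (-α)) volume a y := absShift_ii hr y a y
  have i2 : IntervalIntegrable (fun z => |y - z| ^ (-α)) volume y b := absShift_ii hr y y b
  have esplit := integral_add_adjacent_intervals i1 i2
  have e1 : ∫ z in a..y, |y - z| ^ (-α) = (y - a) ^ (1 - α) / (1 - α) := by
    have : ∫ z in a..y, |y - z| ^ (-α) = ∫ z in a..y, (y - z) ^ (-α) := by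
      apply integral_congr
      intro z hz
      rw [uIcc_of_le h1] at hz
      simp [abs_of_nonneg (by linarith [hz.2] : (0:ℝ) ≤ y - z)]
    rw [this, integral_comp_sub_left (fun u => u ^ (-α)) y, sub_self, rpow_piece' hr,
      show -α + 1 = 1 - α by ring]
  have e2 : ∫ z in y..b, |y - z| ^ (-α) = (b - y) ^ (1 - α) / (1 - α) := by
    have : ∫ z in y..b, |y - z| ^ (-α) = ∫ z in y..b, (z - y) ^ (-α) := by
      apply integral_congr
      intro z hz
      rw [uIcc_of_le h2] at hz
      have hy : |y - z| = z - y := by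
        rw [abs_sub_comm]; exact abs_of_nonneg (by linarith [hz.1])
      simp [hy]
    rw [this, integral_comp_sub_right (fun u => u ^ (-α)) y, sub_self, rpow_piece' hr,
      show -α + 1 = 1 - α by ring]
  rw [e0, ← esplit, e1, e2]
  ring

lemma outer_facts {α : ℝ} (hα : 0 < α) (hα1 : α < 1) (a b : ℝ) (hab : a ≤ b) :
    (IntegrableOn (fun y => ((y - a) ^ (1 - α) + (b - y) ^ (1 - α)) / (1 - α)) (Ioo a b) volume)
    ∧ ∫ y in Ioo a b, ((y - a) ^ (1 - α) + (b - y) ^ (1 - α)) / (1 - α)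
      = 2 * (b - a) ^ (2 - α) / ((1 - α) * (2 - α)) := by
  have hp : (-1:ℝ) < 1 - α := by linarith
  have j1 : IntervalIntegrable (fun y => (y - a) ^ (1 - α)) volume a b := by
    have := (intervalIntegrable_rpow' hp (a := 0) (b := b - a)).comp_sub_right a
    simpa using this
  have j2 : IntervalIntegrable (fun y => (b - y) ^ (1 - α)) volume a b := by
    have := (intervalIntegrable_rpow' hp (a := b - a) (b := 0)).comp_sub_left b
    simpa using this
  have jsum := j1.add j2
  constructor
  · exact (jsum.1.mono_set Ioo_subset_Ioc_self).div_const _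
  · rw [← integral_Ioc_eq_integral_Ioo, ← integral_of_le hab]
    rw [intervalIntegral.integral_div, integral_add j1 j2]
    have v1 : ∫ y in a..b, (y - a) ^ (1 - α) = (b - a) ^ (2 - α) / (2 - α) := by
      rw [integral_comp_sub_right (fun u => u ^ (1 - α)) a, sub_self, rpow_piece' hp]
      rw [show (1:ℝ) - α + 1 = 2 - α by ring]
    have v2 : ∫ y in a..b, (b - y) ^ (1 - α) = (b - a) ^ (2 - α) / (2 - α) := by
      rw [integral_comp_sub_left (fun u => u ^ (1 - α)) b, sub_self, rpow_piece' hp]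
      rw [show (1:ℝ) - α + 1 = 2 - α by ring]
    rw [v1, v2]
    field_simp
    ring

lemma wk_nonneg (s z : ℝ) : 0 ≤ waveKernel s z := by
  unfold waveKernel; split_ifs <;> norm_num

lemma wk_le (s z : ℝ) : waveKernel s z ≤ 1/2 := by
  unfold waveKernel; split_ifs <;> norm_num

lemma wk_abs_diff_le (s z w : ℝ) : |waveKernel s z - waveKernel s w| ≤ 1/2 := by
  rw [abs_sub_le_iff]
  constructor <;> nlinarith [wk_nonneg s z, wk_le s z, wk_nonneg s w, wk_le s w]

lemma wk_zero {s z : ℝ} (h : s ≤ |z|) : waveKernel s z = 0 := if_neg (not_lt.2 h)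

end Aux


theorem stmt_17 (α x x' t : ℝ) (hα : 0 < α) (hα1 : α < 1) (hxx : x ≤ x')
    (ht : 0 ≤ t) (ht2 : t ≤ (x' - x) / 2) :
    (∫ s in Set.Ioc 0 t, ∫ y : ℝ, ∫ z : ℝ,
        |waveKernel s (x - y) - waveKernel s (x' - y)| *
          (rieszConst (1 - α) * |y - z| ^ (-α)) *
          |waveKernel s (x - z) - waveKernel s (x' - z)|) ≤
      rieszConst (1 - α) * (2 ^ (3 - α) + 2) /
          (2 * (1 - α) * (2 - α) * (3 - α)) * (x' - x) ^ (3 - α) := by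
  have hr : (-1:ℝ) < -α := by linarith
  have hd0 : (0:ℝ) ≤ x' - x := by linarith
  have he1 : (0:ℝ) < 1 - α := by linarith
  have he2 : (0:ℝ) < 2 - α := by linarith
  have he3 : (0:ℝ) < 3 - α := by linarith
  have hc : 0 ≤ rieszConst (1 - α) := by
    unfold rieszConst
    have hsin : 0 ≤ Real.sin ((1 - α) * π / 2) := by
      apply Real.sin_nonneg_of_nonneg_of_le_pi
      · nlinarith [Real.pi_pos, mul_nonneg Real.pi_pos.le he1.le]
      · nlinarith [Real.pi_pos, mul_nonneg Real.pi_pos.le hα.le]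
    have hgam : 0 < Real.Gamma (1 - (1 - α)) := by
      rw [show (1:ℝ) - (1 - α) = α by ring]; exact Real.Gamma_pos_of_pos hα
    exact div_nonneg (mul_nonneg hsin hgam.le) Real.pi_pos.le
  set c := rieszConst (1 - α) with hcdef
  have hg0 : ∀ s y z : ℝ, 0 ≤ |waveKernel s (x - y) - waveKernel s (x' - y)| *
      (c * |y - z| ^ (-α)) * |waveKernel s (x - z) - waveKernel s (x' - z)| := by
    intro s y z
    exact mul_nonneg (mul_nonneg (abs_nonneg _)
      (mul_nonneg hc (Real.rpow_nonneg (abs_nonneg _) _))) (abs_nonneg _)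
  set M : ℝ := c / 2 * (2 * (x' - x)) ^ (2 - α) / ((1 - α) * (2 - α)) with hMdef
  have hM0 : 0 ≤ M := by
    rw [hMdef]
    have h := Real.rpow_nonneg (by linarith : (0:ℝ) ≤ 2 * (x' - x)) (2 - α)
    have hpos : (0:ℝ) < (1 - α) * (2 - α) := mul_pos he1 he2
    exact div_nonneg (mul_nonneg (by linarith) h) hpos.le
  have key : ∀ s ∈ Set.Ioc 0 t, (∫ y : ℝ, ∫ z : ℝ,
      |waveKernel s (x - y) - waveKernel s (x' - y)| *
        (c * |y - z| ^ (-α)) *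
        |waveKernel s (x - z) - waveKernel s (x' - z)|) ≤ M := by
    intro s hs
    obtain ⟨hs0, hst⟩ := hs
    set a := x - s with hadef
    set b := x' + s with hbdef
    have hab : a ≤ b := by rw [hadef, hbdef]; linarith
    have hout : ∀ w, w ∉ Set.Ioo a b → waveKernel s (x - w) = 0 ∧ waveKernel s (x' - w) = 0 := by
      intro w hw
      simp only [Set.mem_Ioo, not_and_or, not_lt] at hw
      rcases hw with hw | hw
      · rw [hadef] at hw
        constructor <;> apply wk_zero <;> exact le_abs.2 (Or.inl (by linarith))
      · rw [hbdef] at hw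
        constructor <;> apply wk_zero <;> exact le_abs.2 (Or.inr (by linarith))
    set phi : ℝ → ℝ := Set.indicator (Set.Ioo a b)
      (fun y => c / 4 * (((y - a) ^ (1 - α) + (b - y) ^ (1 - α)) / (1 - α))) with hphidef
    have hphiint : Integrable phi := by
      rw [hphidef, integrable_indicator_iff measurableSet_Ioo]
      exact ((outer_facts hα hα1 a b hab).1.const_mul (c / 4))
    have hyle : ∀ y : ℝ, (∫ z : ℝ,
        |waveKernel s (x - y) - waveKernel s (x' - y)| * (c * |y - z| ^ (-α)) *
          |waveKernel s (x - z) - waveKernel s (x' - z)|) ≤ phi y := by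
      intro y
      by_cases hy : y ∈ Set.Ioo a b
      · set psi : ℝ → ℝ := Set.indicator (Set.Ioo a b) (fun z => c / 4 * |y - z| ^ (-α)) with hpsidef
        have hpsiint : Integrable psi := by
          rw [hpsidef, integrable_indicator_iff measurableSet_Ioo]
          exact (absShift_int hr y a b).const_mul _
        have hle : ∀ z : ℝ, |waveKernel s (x - y) - waveKernel s (x' - y)| * (c * |y - z| ^ (-α)) *
            |waveKernel s (x - z) - waveKernel s (x' - z)| ≤ psi z := by
          intro z
          by_cases hz : z ∈ Set.Ioo a b
          · rw [hpsidef, Set.indicator_of_mem hz]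
            have h1 := wk_abs_diff_le s (x - y) (x' - y)
            have h2 := wk_abs_diff_le s (x - z) (x' - z)
            have hmid : 0 ≤ c * |y - z| ^ (-α) :=
              mul_nonneg hc (Real.rpow_nonneg (abs_nonneg _) _)
            calc |waveKernel s (x - y) - waveKernel s (x' - y)| * (c * |y - z| ^ (-α)) *
                  |waveKernel s (x - z) - waveKernel s (x' - z)|
                ≤ 1 / 2 * (c * |y - z| ^ (-α)) * (1 / 2) := by
                  apply mul_le_mul _ h2 (abs_nonneg _) (by positivity)
                  exact mul_le_mul_of_nonneg_right h1 hmid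
              _ = c / 4 * |y - z| ^ (-α) := by ring
          · rw [hpsidef, Set.indicator_of_notMem hz]
            obtain ⟨hz1, hz2⟩ := hout z hz
            rw [hz1, hz2]
            simp
        calc (∫ z : ℝ, |waveKernel s (x - y) - waveKernel s (x' - y)| * (c * |y - z| ^ (-α)) *
              |waveKernel s (x - z) - waveKernel s (x' - z)|)
            ≤ ∫ z : ℝ, psi z := integral_mono_of_nonneg
              (Filter.Eventually.of_forall (hg0 s y)) hpsiint (Filter.Eventually.of_forall hle)
          _ = ∫ z in Set.Ioo a b, c / 4 * |y - z| ^ (-α) := by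
              rw [hpsidef, integral_indicator measurableSet_Ioo]
          _ = c / 4 * ∫ z in Set.Ioo a b, |y - z| ^ (-α) := integral_const_mul _ _
          _ = c / 4 * (((y - a) ^ (1 - α) + (b - y) ^ (1 - α)) / (1 - α)) := by
              rw [inner_eq hα hα1 a b y hy.1.le hy.2.le]
          _ = phi y := by rw [hphidef, Set.indicator_of_mem hy]
      · obtain ⟨hy1, hy2⟩ := hout y hy
        rw [hphidef, Set.indicator_of_notMem hy]
        simp [hy1, hy2]
    have hIs : (∫ y : ℝ, ∫ z : ℝ,
        |waveKernel s (x - y) - waveKernel s (x' - y)| * (c * |y - z| ^ (-α)) *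
          |waveKernel s (x - z) - waveKernel s (x' - z)|)
        ≤ c / 2 * (b - a) ^ (2 - α) / ((1 - α) * (2 - α)) := by
      calc (∫ y : ℝ, ∫ z : ℝ, |waveKernel s (x - y) - waveKernel s (x' - y)| *
            (c * |y - z| ^ (-α)) * |waveKernel s (x - z) - waveKernel s (x' - z)|)
          ≤ ∫ y : ℝ, phi y := integral_mono_of_nonneg
            (Filter.Eventually.of_forall fun y => integral_nonneg (hg0 s y)) hphiint
            (Filter.Eventually.of_forall hyle)
        _ = ∫ y in Set.Ioo a b, c / 4 * (((y - a) ^ (1 - α) + (b - y) ^ (1 - α)) / (1 - α)) := by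
            rw [hphidef, integral_indicator measurableSet_Ioo]
        _ = c / 4 * ∫ y in Set.Ioo a b, ((y - a) ^ (1 - α) + (b - y) ^ (1 - α)) / (1 - α) :=
            integral_const_mul _ _
        _ = c / 4 * (2 * (b - a) ^ (2 - α) / ((1 - α) * (2 - α))) := by
            rw [(outer_facts hα hα1 a b hab).2]
        _ = c / 2 * (b - a) ^ (2 - α) / ((1 - α) * (2 - α)) := by ring
    refine hIs.trans ?_
    rw [hMdef]
    have hba : b - a ≤ 2 * (x' - x) := by rw [hadef, hbdef]; linarith
    have hba0 : (0:ℝ) ≤ b - a := by linarith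
    have hrp : (b - a) ^ (2 - α) ≤ (2 * (x' - x)) ^ (2 - α) :=
      Real.rpow_le_rpow hba0 hba he2.le
    have hmm : c / 2 * (b - a) ^ (2 - α) ≤ c / 2 * (2 * (x' - x)) ^ (2 - α) :=
      mul_le_mul_of_nonneg_left hrp (by linarith)
    exact (div_le_div_iff_of_pos_right (mul_pos he1 he2)).2 hmm
  have hvol : volume (Set.Ioc (0:ℝ) t) < ⊤ := by
    rw [Real.volume_Ioc]; exact ENNReal.ofReal_lt_top
  have hMint : IntegrableOn (fun _ : ℝ => M) (Set.Ioc 0 t) volume :=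
    integrableOn_const hvol.ne
  have hmono : (∫ s in Set.Ioc 0 t, ∫ y : ℝ, ∫ z : ℝ,
      |waveKernel s (x - y) - waveKernel s (x' - y)| *
        (c * |y - z| ^ (-α)) *
        |waveKernel s (x - z) - waveKernel s (x' - z)|) ≤ ∫ _s in Set.Ioc (0:ℝ) t, M :=
    integral_mono_of_nonneg
      (Filter.Eventually.of_forall fun s => integral_nonneg fun y => integral_nonneg (hg0 s y))
      hMint
      ((ae_restrict_iff' measurableSet_Ioc).2 (Filter.Eventually.of_forall key))
  have hconst : (∫ _s in Set.Ioc (0:ℝ) t, M) = t * M := by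
    rw [setIntegral_const, Real.volume_real_Ioc, smul_eq_mul, max_eq_left (by linarith)]
    ring
  refine hmono.trans ?_
  rw [hconst]
  have h1 : t * M ≤ (x' - x) / 2 * M := mul_le_mul_of_nonneg_right ht2 hM0
  refine h1.trans ?_
  rw [hMdef]
  have emul : (2 * (x' - x)) ^ (2 - α) = 2 ^ (2 - α) * (x' - x) ^ (2 - α) :=
    Real.mul_rpow (by norm_num) hd0
  have e3' : (x' - x) ^ (3 - α) = (x' - x) ^ (2 - α) * (x' - x) := by
    rw [show (3:ℝ) - α = (2 - α) + 1 by ring,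
      Real.rpow_add_of_nonneg hd0 he2.le zero_le_one, Real.rpow_one]
  have e2' : (2:ℝ) ^ (3 - α) = 2 * 2 ^ (2 - α) := by
    rw [show (3:ℝ) - α = 1 + (2 - α) by ring, Real.rpow_add two_pos, Real.rpow_one]
  rw [emul, e2', e3']
  have hA : (0:ℝ) < 2 ^ (2 - α) := Real.rpow_pos_of_pos two_pos _
  have hB : (0:ℝ) ≤ (x' - x) ^ (2 - α) := Real.rpow_nonneg hd0 _
  have hkey : 2 ^ (2 - α) * (3 - α) ≤ 4 * 2 ^ (2 - α) + 4 := by nlinarith [hA, hα.le]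
  have lhs_eq : (x' - x) / 2 * (c / 2 * (2 ^ (2 - α) * (x' - x) ^ (2 - α)) / ((1 - α) * (2 - α)))
      = c * ((x' - x) ^ (2 - α) * (x' - x)) * 2 ^ (2 - α) / (4 * ((1 - α) * (2 - α))) := by
    field_simp
    ring
  have rhs_eq : c * (2 * 2 ^ (2 - α) + 2) / (2 * (1 - α) * (2 - α) * (3 - α)) *
        ((x' - x) ^ (2 - α) * (x' - x))
      = c * ((x' - x) ^ (2 - α) * (x' - x)) * (2 * 2 ^ (2 - α) + 2) /
        (2 * ((1 - α) * (2 - α) * (3 - α))) := by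
    field_simp
  rw [lhs_eq, rhs_eq, div_le_div_iff₀ (by positivity) (by positivity)]
  have hq : 0 ≤ c * ((x' - x) ^ (2 - α) * (x' - x)) * ((1 - α) * (2 - α)) :=
    mul_nonneg (mul_nonneg hc (mul_nonneg hB hd0)) (mul_pos he1 he2).le
  nlinarith [mul_le_mul_of_nonneg_left hkey hq]
end
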